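/- arXiv:2101.09664 — 6 statements merged into one kernel-verified Lean document; each statement's English description precedes it below -/
import Mathlib

section
/- For every natural number N and every angle θ₀ ∈ (0, π/2), the determinant N·sin(Nθ₀)·cos((N+2)θ₀) − (N+2)·sin((N+2)θ₀)·cos(Nθ₀) is nonzero. -/
open Real

/-- Strict Chebyshev-type bound: `|sin (n t)| < n sin t` for `n ≥ 2`, `0 < t < π`. -/
lemma abs_sin_nat_mul_lt {t : ℝ} (ht : 0 < t) (ht' : t < π) :
    ∀ n : ℕ, 2 ≤ n → |Real.sin (n * t)| < n * Real.sin t := by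
  have hs : 0 < Real.sin t := Real.sin_pos_of_pos_of_lt_pi ht ht'
  intro n hn
  induction n, hn using Nat.le_induction with
  | base =>
    have h2 : Real.sin ((2 : ℕ) * t) = 2 * Real.sin t * Real.cos t := by
      push_cast; exact Real.sin_two_mul t
    have hc : |Real.cos t| < 1 := by
      have hpy := Real.sin_sq_add_cos_sq t
      rw [abs_lt]; constructor <;> nlinarith
    rw [h2, abs_mul, abs_of_pos (by positivity : (0:ℝ) < 2 * Real.sin t)]
    push_cast
    nlinarith [abs_nonneg (Real.cos t)]
  | succ n hn ih =>
    have h : ((n : ℝ) + 1) * t = n * t + t := by ring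
    push_cast
    rw [h, Real.sin_add]
    have h1 := abs_add_le (Real.sin (n*t) * Real.cos t) (Real.cos (n*t) * Real.sin t)
    have h2 : |Real.sin (n*t) * Real.cos t| ≤ |Real.sin (n*t)| := by
      rw [abs_mul]
      exact mul_le_of_le_one_right (abs_nonneg _) (Real.abs_cos_le_one t)
    have h3 : |Real.cos (n*t) * Real.sin t| ≤ Real.sin t := by
      rw [abs_mul, abs_of_pos hs]
      exact mul_le_of_le_one_left hs.le (Real.abs_cos_le_one _)
    have ih' := ih
    push_cast at ih'
    calc |Real.sin (n*t) * Real.cos t + Real.cos (n*t) * Real.sin t|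
        ≤ |Real.sin (n*t) * Real.cos t| + |Real.cos (n*t) * Real.sin t| := h1
      _ ≤ |Real.sin (n*t)| + Real.sin t := by linarith
      _ < (n : ℝ) * Real.sin t + Real.sin t := by linarith
      _ = ((n : ℝ) + 1) * Real.sin t := by ring

/-- For every natural number `N` and every `θ₀ ∈ (0, π/2)`, the determinant
`N·sin(Nθ₀)·cos((N+2)θ₀) − (N+2)·sin((N+2)θ₀)·cos(Nθ₀)` is nonzero. -/
theorem determinant_ne_zero (N : ℕ) (θ₀ : ℝ) (hθ₀ : 0 < θ₀) (hθ₀' : θ₀ < π / 2) :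
    (N : ℝ) * Real.sin (N * θ₀) * Real.cos ((N + 2) * θ₀)
      - (N + 2) * Real.sin ((N + 2) * θ₀) * Real.cos (N * θ₀) ≠ 0 := by
  have ht : 0 < 2 * θ₀ := by linarith
  have ht' : 2 * θ₀ < π := by linarith
  have hs : 0 < Real.sin (2 * θ₀) := Real.sin_pos_of_pos_of_lt_pi ht ht'
  have key : (N : ℝ) * Real.sin (N * θ₀) * Real.cos ((N + 2) * θ₀)
      - (N + 2) * Real.sin ((N + 2) * θ₀) * Real.cos (N * θ₀)
      = -(Real.sin ((N + 1) * (2 * θ₀)) + (N + 1) * Real.sin (2 * θ₀)) := by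
    have h1 : ((N : ℝ) + 2) * θ₀ = N * θ₀ + 2 * θ₀ := by ring
    have h2 : ((N : ℝ) + 1) * (2 * θ₀) = N * θ₀ + (N * θ₀ + 2 * θ₀) := by ring
    rw [h1, h2, Real.sin_add, Real.cos_add, Real.sin_add (N * θ₀) (N * θ₀ + 2 * θ₀),
      Real.cos_add (N * θ₀) (2 * θ₀), Real.sin_add (N * θ₀) (2 * θ₀)]
    linear_combination (-((N : ℝ) + 1) * Real.sin (2 * θ₀)) * Real.sin_sq_add_cos_sq ((N : ℝ) * θ₀)
  rw [key]
  rcases Nat.eq_zero_or_pos N with hN | hN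
  · subst hN
    simp only [Nat.cast_zero, zero_add, one_mul]
    intro h
    nlinarith
  · have hn2 : 2 ≤ N + 1 := by omega
    have hlt := abs_sin_nat_mul_lt ht ht' (N + 1) hn2
    push_cast at hlt
    have := neg_abs_le (Real.sin (((N : ℝ) + 1) * (2 * θ₀)))
    intro h
    nlinarith
end

section
/- Let N be a natural number, k > 0 a real number, θ₀ ∈ (0, π/2), and let a, b : ℕ × ℕ → ℂ and ã, b̃ ∈ ℂ satisfy: (i) 4·(N+1)·a_{N,1} + k²·a_{N,0} = ã and 4·(N+1)·b_{N,1} + k²·b_{N,0} = b̃; (ii) 4·(n+m+1)·(m+1)·a_{n,m+1} + k²·a_{n,m} = 0 and 4·(n+m+1)·(m+1)·b_{n,m+1} + k²·b_{n,m} = 0 whenever n + 2m < N, and also whenever n + 2m = N with m > 0; (iii) for every natural number l ≤ N + 2, the finite sums over pairs (n,m) ∈ ℕ × ℕ with n + 2m = l satisfy ∑ a_{n,m}·cos(nθ₀) = 0, ∑ n·a_{n,m}·sin(nθ₀) = 0, ∑ n·b_{n,m}·cos(nθ₀) = 0, and ∑ b_{n,m}·sin(nθ₀) = 0. Then ã =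 0, and if N ≥ 1 also b̃ = 0. -/
open Real

/-- The finite set of pairs `(n, m) ∈ ℕ × ℕ` with `n + 2m = l`. -/
def cornerPairs (l : ℕ) : Finset (ℕ × ℕ) :=
  (Finset.range (l + 1) ×ˢ Finset.range (l + 1)).filter (fun p => p.1 + 2 * p.2 = l)

lemma mem_cornerPairs {l : ℕ} {p : ℕ × ℕ} : p ∈ cornerPairs l ↔ p.1 + 2 * p.2 = l := by
  simp only [cornerPairs, Finset.mem_filter, Finset.mem_product, Finset.mem_range]
  omega

lemma sin_nat_mul_lt {x : ℝ} (hx : 0 < x) (hx' : x < π) :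
    ∀ n : ℕ, 2 ≤ n → |Real.sin (n * x)| < n * Real.sin x := by
  have hs : 0 < Real.sin x := Real.sin_pos_of_pos_of_lt_pi hx hx'
  have hcos : |Real.cos x| < 1 := by
    rw [abs_lt]
    constructor <;> nlinarith [Real.sin_sq_add_cos_sq x]
  intro n hn
  induction n, hn using Nat.le_induction with
  | base =>
      have h2 : Real.sin (((2:ℕ):ℝ) * x) = 2 * Real.sin x * Real.cos x := by
        push_cast
        exact Real.sin_two_mul x
      rw [h2]
      push_cast
      rw [abs_mul, abs_of_pos (by positivity : (0:ℝ) < 2 * Real.sin x)]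
      nlinarith
  | succ n hn ih =>
      have harg : ((n+1 : ℕ) : ℝ) * x = (n:ℝ) * x + x := by push_cast; ring
      rw [harg, Real.sin_add]
      have h1 := abs_add_le (Real.sin ((n:ℝ)*x) * Real.cos x) (Real.cos ((n:ℝ)*x) * Real.sin x)
      have h2 : |Real.sin ((n:ℝ)*x) * Real.cos x| ≤ |Real.sin ((n:ℝ)*x)| := by
        rw [abs_mul]
        nlinarith [abs_nonneg (Real.sin ((n:ℝ)*x)), Real.abs_cos_le_one x]
      have h3 : |Real.cos ((n:ℝ)*x) * Real.sin x| ≤ Real.sin x := by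
        rw [abs_mul, abs_of_pos hs]
        nlinarith [Real.abs_cos_le_one ((n:ℝ)*x)]
      push_cast
      nlinarith [ih]

lemma det1_pos (N : ℕ) {θ : ℝ} (h1 : 0 < θ) (h2 : θ < π/2) :
    0 < ((N:ℝ)+2) * (Real.cos ((N:ℝ)*θ) * Real.sin (((N:ℝ)+2)*θ))
      - (N:ℝ) * (Real.sin ((N:ℝ)*θ) * Real.cos (((N:ℝ)+2)*θ)) := by
  have hx : 0 < 2*θ := by linarith
  have hx' : 2*θ < π := by linarith
  have hs : 0 < Real.sin (2*θ) := Real.sin_pos_of_pos_of_lt_pi hx hx'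
  have e2 : Real.sin (2*θ) = Real.sin (((N:ℝ)+2)*θ) * Real.cos ((N:ℝ)*θ)
      - Real.cos (((N:ℝ)+2)*θ) * Real.sin ((N:ℝ)*θ) := by
    rw [show (2:ℝ)*θ = ((N:ℝ)+2)*θ - (N:ℝ)*θ by ring, Real.sin_sub]
  rcases Nat.eq_zero_or_pos N with hN | hN
  · subst hN
    push_cast
    norm_num
    linarith [hs]
  · have hb := sin_nat_mul_lt hx hx' (N+1) (by omega)
    rw [show ((N+1:ℕ):ℝ) * (2*θ) = (N:ℝ)*θ + ((N:ℝ)+2)*θ by push_cast; ring] at hb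
    rw [Real.sin_add] at hb
    rw [e2] at hb
    have hb' := (abs_lt.mp hb).1
    push_cast at hb'
    nlinarith [hb']

lemma det2_pos (N : ℕ) (hN : 1 ≤ N) {θ : ℝ} (h1 : 0 < θ) (h2 : θ < π/2) :
    0 < (N:ℝ) * (Real.cos ((N:ℝ)*θ) * Real.sin (((N:ℝ)+2)*θ))
      - ((N:ℝ)+2) * (Real.sin ((N:ℝ)*θ) * Real.cos (((N:ℝ)+2)*θ)) := by
  have hx : 0 < 2*θ := by linarith
  have hx' : 2*θ < π := by linarith
  have hs : 0 < Real.sin (2*θ) := Real.sin_pos_of_pos_of_lt_pi hx hx'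
  have e2 : Real.sin (2*θ) = Real.sin (((N:ℝ)+2)*θ) * Real.cos ((N:ℝ)*θ)
      - Real.cos (((N:ℝ)+2)*θ) * Real.sin ((N:ℝ)*θ) := by
    rw [show (2:ℝ)*θ = ((N:ℝ)+2)*θ - (N:ℝ)*θ by ring, Real.sin_sub]
  have hb := sin_nat_mul_lt hx hx' (N+1) (by omega)
  rw [show ((N+1:ℕ):ℝ) * (2*θ) = (N:ℝ)*θ + ((N:ℝ)+2)*θ by push_cast; ring] at hb
  rw [Real.sin_add] at hb
  rw [e2] at hb
  have hb' := (abs_lt.mp hb).2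
  push_cast at hb'
  nlinarith [hb']

/-- Corner-vanishing argument for convex polygonal source supports (proof of Lemma 3.4):
given the recurrence relations and the boundary vanishing conditions up to order `N + 2`,
the lowest-order harmonic coefficients `ã` (and `b̃`, when `N ≥ 1`) of the source vanish. -/
theorem corner_coefficients_vanish (N : ℕ) (k : ℝ) (hk : 0 < k)
    (θ₀ : ℝ) (hθ₀ : 0 < θ₀) (hθ₀' : θ₀ < π / 2)
    (a b : ℕ × ℕ → ℂ) (ta tb : ℂ)
    (hia : 4 * ((N : ℂ) + 1) * a (N, 1) + (k : ℂ) ^ 2 * a (N, 0) = ta)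
    (hib : 4 * ((N : ℂ) + 1) * b (N, 1) + (k : ℂ) ^ 2 * b (N, 0) = tb)
    (hra : ∀ n m : ℕ, (n + 2 * m < N ∨ (n + 2 * m = N ∧ 0 < m)) →
      4 * ((n : ℂ) + m + 1) * ((m : ℂ) + 1) * a (n, m + 1) + (k : ℂ) ^ 2 * a (n, m) = 0)
    (hrb : ∀ n m : ℕ, (n + 2 * m < N ∨ (n + 2 * m = N ∧ 0 < m)) →
      4 * ((n : ℂ) + m + 1) * ((m : ℂ) + 1) * b (n, m + 1) + (k : ℂ) ^ 2 * b (n, m) = 0)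
    (hsum : ∀ l : ℕ, l ≤ N + 2 →
      (∑ p ∈ cornerPairs l, a p * (Real.cos (p.1 * θ₀) : ℂ) = 0) ∧
      (∑ p ∈ cornerPairs l, (p.1 : ℂ) * a p * (Real.sin (p.1 * θ₀) : ℂ) = 0) ∧
      (∑ p ∈ cornerPairs l, (p.1 : ℂ) * b p * (Real.cos (p.1 * θ₀) : ℂ) = 0) ∧
      (∑ p ∈ cornerPairs l, b p * (Real.sin (p.1 * θ₀) : ℂ) = 0)) :
    ta = 0 ∧ (1 ≤ N → tb = 0) := by
  
  have hcoef : ∀ n m : ℕ, (4 : ℂ) * ((n:ℂ)+(m:ℂ)+1) * ((m:ℂ)+1) ≠ 0 := by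
    intro n m
    have h1 : ((n:ℂ)+(m:ℂ)+1) ≠ 0 := by
      have h : ((n+m+1 : ℕ) : ℂ) ≠ 0 := Nat.cast_ne_zero.mpr (by omega)
      push_cast at h
      exact h
    have h2 : ((m:ℂ)+1) ≠ 0 := by
      have h : ((m+1 : ℕ) : ℂ) ≠ 0 := Nat.cast_ne_zero.mpr (by omega)
      push_cast at h
      exact h
    exact mul_ne_zero (mul_ne_zero (by norm_num) h1) h2
  have key : ∀ l : ℕ, l ≤ N + 1 → ∀ n m : ℕ, n + 2 * m = l →
      a (n, m) = 0 ∧ (1 ≤ n → b (n, m) = 0) := by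
    intro l
    induction l using Nat.strong_induction_on with
    | _ l ih =>
      intro hl n m hnm
      have hm1 : ∀ n' m' : ℕ, n' + 2 * m' = l → 1 ≤ m' →
          a (n', m') = 0 ∧ (1 ≤ n' → b (n', m') = 0) := by
        intro n' m' h hm'
        obtain ⟨m'', rfl⟩ : ∃ m'', m' = m'' + 1 := ⟨m' - 1, by omega⟩
        have hprev := ih (n' + 2 * m'') (by omega) (by omega) n' m'' rfl
        constructor
        · have hr := hra n' m'' (Or.inl (by omega))
          rw [hprev.1, mul_zero, add_zero] at hr
          exact (mul_eq_zero.mp hr).resolve_left (hcoef n' m'')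
        · intro hn'
          have hr := hrb n' m'' (Or.inl (by omega))
          rw [hprev.2 hn', mul_zero, add_zero] at hr
          exact (mul_eq_zero.mp hr).resolve_left (hcoef n' m'')
      rcases Nat.eq_zero_or_pos m with hm | hm
      · subst hm
        obtain rfl : n = l := by omega
        obtain ⟨s1, s2, s3, s4⟩ := hsum n (by omega)
        have hmem : ((n, 0) : ℕ × ℕ) ∈ cornerPairs n := mem_cornerPairs.mpr (by omega)
        have hz1 : ∀ q ∈ cornerPairs n, q ≠ ((n,0) : ℕ × ℕ) →
            a q * (Real.cos ((q.1:ℝ) * θ₀) : ℂ) = 0 := by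
          rintro ⟨n', m'⟩ hq hqne
          have hql := mem_cornerPairs.mp hq
          have hm' : 1 ≤ m' := by
            rcases Nat.eq_zero_or_pos m' with h0 | h0
            · exfalso; apply hqne; subst h0
              have : n' = n := by omega
              subst this; rfl
            · exact h0
          rw [(hm1 n' m' hql hm').1, zero_mul]
        have hz2 : ∀ q ∈ cornerPairs n, q ≠ ((n,0) : ℕ × ℕ) →
            ((q.1 : ℂ)) * a q * (Real.sin ((q.1:ℝ) * θ₀) : ℂ) = 0 := by
          rintro ⟨n', m'⟩ hq hqne
          have hql := mem_cornerPairs.mp hq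
          have hm' : 1 ≤ m' := by
            rcases Nat.eq_zero_or_pos m' with h0 | h0
            · exfalso; apply hqne; subst h0
              have : n' = n := by omega
              subst this; rfl
            · exact h0
          rw [(hm1 n' m' hql hm').1, mul_zero, zero_mul]
        have hz3 : ∀ q ∈ cornerPairs n, q ≠ ((n,0) : ℕ × ℕ) →
            ((q.1 : ℂ)) * b q * (Real.cos ((q.1:ℝ) * θ₀) : ℂ) = 0 := by
          rintro ⟨n', m'⟩ hq hqne
          have hql := mem_cornerPairs.mp hq
          rcases Nat.eq_zero_or_pos n' with h0 | h0
          · subst h0; norm_num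
          have hm' : 1 ≤ m' := by
            rcases Nat.eq_zero_or_pos m' with h1 | h1
            · exfalso; apply hqne; subst h1
              have : n' = n := by omega
              subst this; rfl
            · exact h1
          rw [(hm1 n' m' hql hm').2 h0, mul_zero, zero_mul]
        have hz4 : ∀ q ∈ cornerPairs n, q ≠ ((n,0) : ℕ × ℕ) →
            b q * (Real.sin ((q.1:ℝ) * θ₀) : ℂ) = 0 := by
          rintro ⟨n', m'⟩ hq hqne
          have hql := mem_cornerPairs.mp hq
          rcases Nat.eq_zero_or_pos n' with h0 | h0
          · subst h0; norm_num
          have hm' : 1 ≤ m' := by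
            rcases Nat.eq_zero_or_pos m' with h1 | h1
            · exfalso; apply hqne; subst h1
              have : n' = n := by omega
              subst this; rfl
            · exact h1
          rw [(hm1 n' m' hql hm').2 h0, zero_mul]
        have e1 : a (n,0) * (Real.cos ((n:ℝ) * θ₀) : ℂ) = 0 :=
          (Finset.sum_eq_single_of_mem ((n,0) : ℕ × ℕ) hmem hz1).symm.trans s1
        have e2 : ((n:ℂ)) * a (n,0) * (Real.sin ((n:ℝ) * θ₀) : ℂ) = 0 :=
          (Finset.sum_eq_single_of_mem ((n,0) : ℕ × ℕ) hmem hz2).symm.trans s2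
        have e3 : ((n:ℂ)) * b (n,0) * (Real.cos ((n:ℝ) * θ₀) : ℂ) = 0 :=
          (Finset.sum_eq_single_of_mem ((n,0) : ℕ × ℕ) hmem hz3).symm.trans s3
        have e4 : b (n,0) * (Real.sin ((n:ℝ) * θ₀) : ℂ) = 0 :=
          (Finset.sum_eq_single_of_mem ((n,0) : ℕ × ℕ) hmem hz4).symm.trans s4
        constructor
        · rcases Nat.eq_zero_or_pos n with h0 | h0
          · subst h0; simpa using e1
          · by_contra hA
            have hc0 : Real.cos ((n:ℝ)*θ₀) = 0 := by
              have h := (mul_eq_zero.mp e1).resolve_left hA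
              exact_mod_cast h
            have hs0 : Real.sin ((n:ℝ)*θ₀) = 0 := by
              rcases mul_eq_zero.mp e2 with h | h
              · rcases mul_eq_zero.mp h with h' | h'
                · exact absurd h' (Nat.cast_ne_zero.mpr (by omega))
                · exact absurd h' hA
              · exact_mod_cast h
            have hpyth := Real.sin_sq_add_cos_sq ((n:ℝ)*θ₀)
            rw [hs0, hc0] at hpyth
            norm_num at hpyth
        · intro hl1
          by_contra hB
          have hs0 : Real.sin ((n:ℝ)*θ₀) = 0 := by
            have h := (mul_eq_zero.mp e4).resolve_left hB
            exact_mod_cast h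
          have hc0 : Real.cos ((n:ℝ)*θ₀) = 0 := by
            rcases mul_eq_zero.mp e3 with h | h
            · rcases mul_eq_zero.mp h with h' | h'
              · exact absurd h' (Nat.cast_ne_zero.mpr (by omega))
              · exact absurd h' hB
            · exact_mod_cast h
          have hpyth := Real.sin_sq_add_cos_sq ((n:ℝ)*θ₀)
          rw [hs0, hc0] at hpyth
          norm_num at hpyth
      · exact hm1 n m hnm hm
  obtain ⟨s1, s2, s3, s4⟩ := hsum (N+2) le_rfl
  have hmem1 : ((N,1) : ℕ × ℕ) ∈ cornerPairs (N+2) :=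
    mem_cornerPairs.mpr (show N + 2*1 = N+2 by omega)
  have hne : ((N,1) : ℕ × ℕ) ≠ (N+2, 0) := by simp
  have hsub : ({(N,1), (N+2,0)} : Finset (ℕ × ℕ)) ⊆ cornerPairs (N+2) := by
    intro q hq
    simp only [Finset.mem_insert, Finset.mem_singleton] at hq
    rcases hq with rfl | rfl
    · exact hmem1
    · exact mem_cornerPairs.mpr (show (N+2) + 2*0 = N+2 by omega)
  have hoffa : ∀ q : ℕ × ℕ, q ∈ cornerPairs (N+2) →
      q ∉ ({(N,1), (N+2,0)} : Finset (ℕ × ℕ)) → a q = 0 := by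
    rintro ⟨n, m⟩ hq hq'
    simp only [Finset.mem_insert, Finset.mem_singleton, Prod.mk.injEq, not_or] at hq'
    have hl := mem_cornerPairs.mp hq
    simp only at hl
    obtain ⟨m', rfl⟩ : ∃ m', m = m' + 1 := ⟨m-1, by omega⟩
    have hprev : a (n, m') = 0 := (key N (by omega) n m' (by omega)).1
    have hr := hra n m' (Or.inr ⟨by omega, by omega⟩)
    rw [hprev, mul_zero, add_zero] at hr
    exact (mul_eq_zero.mp hr).resolve_left (hcoef n m')
  have hoffb : ∀ q : ℕ × ℕ, q ∈ cornerPairs (N+2) →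
      q ∉ ({(N,1), (N+2,0)} : Finset (ℕ × ℕ)) → 1 ≤ q.1 → b q = 0 := by
    rintro ⟨n, m⟩ hq hq' hn
    simp only [Finset.mem_insert, Finset.mem_singleton, Prod.mk.injEq, not_or] at hq'
    have hl := mem_cornerPairs.mp hq
    simp only at hl hn
    obtain ⟨m', rfl⟩ : ∃ m', m = m' + 1 := ⟨m-1, by omega⟩
    have hprev : b (n, m') = 0 := (key N (by omega) n m' (by omega)).2 hn
    have hr := hrb n m' (Or.inr ⟨by omega, by omega⟩)
    rw [hprev, mul_zero, add_zero] at hr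
    exact (mul_eq_zero.mp hr).resolve_left (hcoef n m')
  rw [← Finset.sum_subset hsub (fun q hq hq' => by
        rw [hoffa q hq hq', zero_mul]),
      Finset.sum_pair hne] at s1
  rw [← Finset.sum_subset hsub (fun q hq hq' => by
        rw [hoffa q hq hq', mul_zero, zero_mul]),
      Finset.sum_pair hne] at s2
  rw [← Finset.sum_subset hsub (fun q hq hq' => by
        rcases Nat.eq_zero_or_pos q.1 with h0 | h0
        · rw [h0]; norm_num
        · rw [hoffb q hq hq' h0, mul_zero, zero_mul]),
      Finset.sum_pair hne] at s3
  rw [← Finset.sum_subset hsub (fun q hq hq' => by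
        rcases Nat.eq_zero_or_pos q.1 with h0 | h0
        · have : ((q.1 : ℝ)) * θ₀ = 0 := by rw [h0]; norm_num
          rw [this]
          norm_num
        · rw [hoffb q hq hq' h0, zero_mul]),
      Finset.sum_pair hne] at s4
  push_cast at s1 s2 s3 s4
  have hdet1 := det1_pos N hθ₀ hθ₀'
  have hmain1 : a (N,1) * ((((N:ℝ)+2) * (Real.cos ((N:ℝ)*θ₀) * Real.sin (((N:ℝ)+2)*θ₀))
      - (N:ℝ) * (Real.sin ((N:ℝ)*θ₀) * Real.cos (((N:ℝ)+2)*θ₀)) : ℝ) : ℂ) = 0 := by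
    push_cast
    linear_combination (((N:ℂ) + 2) * Complex.sin (((N:ℂ) + 2) * (θ₀:ℂ))) * s1
      - Complex.cos (((N:ℂ) + 2) * (θ₀:ℂ)) * s2
  have hA : a (N,1) = 0 := (mul_eq_zero.mp hmain1).resolve_right
    (Complex.ofReal_ne_zero.mpr (ne_of_gt hdet1))
  have ha0 : a (N,0) = 0 := (key N (by omega) N 0 (by omega)).1
  constructor
  · rw [← hia, hA, ha0]; ring
  · intro hN1
    have hdet2 := det2_pos N hN1 hθ₀ hθ₀'
    have hmain2 : b (N,1) * (((N:ℝ) * (Real.cos ((N:ℝ)*θ₀) * Real.sin (((N:ℝ)+2)*θ₀))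
        - ((N:ℝ)+2) * (Real.sin ((N:ℝ)*θ₀) * Real.cos (((N:ℝ)+2)*θ₀)) : ℝ) : ℂ) = 0 := by
      push_cast
      linear_combination Complex.sin (((N:ℂ) + 2) * (θ₀:ℂ)) * s3
        - (((N:ℂ) + 2) * Complex.cos (((N:ℂ) + 2) * (θ₀:ℂ))) * s4
    have hB : b (N,1) = 0 := (mul_eq_zero.mp hmain2).resolve_right
      (Complex.ofReal_ne_zero.mpr (ne_of_gt hdet2))
    have hb0 : b (N,0) = 0 := (key N (by omega) N 0 (by omega)).2 hN1
    rw [← hib, hB, hb0]; ring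
end

section
/- Let N be a natural number, k > 0 a real number, θ₀ ∈ (0, π/2), and let a : ℕ × ℕ → ℂ satisfy: (i) 4·(n+m+1)·(m+1)·a_{n,m+1} + k²·a_{n,m} = 0 for every pair (n,m) ∈ ℕ × ℕ with n + 2m < N; (ii) for every natural number l < N, the finite sums over pairs (n,m) ∈ ℕ × ℕ with n + 2m = l satisfy ∑ a_{n,m}·cos(nθ₀) = 0 and ∑ n·a_{n,m}·sin(nθ₀) = 0. Then a_{n,m} = 0 for every pair (n,m) with n + 2m < N. -/
open Real

/-- Corner-vanishing argument (proof of Lemma 3.4): the recurrence relations for `n + 2m < N`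
together with the boundary vanishing conditions for all levels `l < N` force all the
coefficients `a_{n,m}` with `n + 2m < N` to vanish. -/
theorem low_order_coefficients_vanish (N : ℕ) (k : ℝ) (hk : 0 < k)
    (θ₀ : ℝ) (hθ₀ : 0 < θ₀) (hθ₀' : θ₀ < π / 2)
    (a : ℕ × ℕ → ℂ)
    (hrec : ∀ n m : ℕ, n + 2 * m < N →
      4 * ((n : ℂ) + m + 1) * ((m : ℂ) + 1) * a (n, m + 1) + (k : ℂ) ^ 2 * a (n, m) = 0)
    (hsum : ∀ l : ℕ, l < N →
      (∑ p ∈ cornerPairs l, a p * (Real.cos (p.1 * θ₀) : ℂ) = 0) ∧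
      (∑ p ∈ cornerPairs l, (p.1 : ℂ) * a p * (Real.sin (p.1 * θ₀) : ℂ) = 0)) :
    ∀ n m : ℕ, n + 2 * m < N → a (n, m) = 0 := by
  suffices key : ∀ l : ℕ, l < N → ∀ n m : ℕ, n + 2 * m = l → a (n, m) = 0 by
    intro n m h
    exact key (n + 2 * m) h n m rfl
  intro l
  induction l using Nat.strong_induction_on with
  | _ l IH =>
    intro hl
    -- first: all coefficients with m ≥ 1 at level l vanish
    have hzero : ∀ n' m' : ℕ, n' + 2 * m' = l → 1 ≤ m' → a (n', m') = 0 := by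
      intro n' m' h hm
      obtain ⟨m'', rfl⟩ : ∃ m'', m' = m'' + 1 := ⟨m' - 1, by omega⟩
      have hlt : n' + 2 * m'' < N := by omega
      have h0 : a (n', m'') = 0 :=
        IH (n' + 2 * m'') (by omega) (by omega) n' m'' rfl
      have hr := hrec n' m'' hlt
      rw [h0, mul_zero, add_zero] at hr
      have h1 : ((n' : ℂ) + m'' + 1) ≠ 0 := by
        have : ((n' + m'' + 1 : ℕ) : ℂ) ≠ 0 := Nat.cast_ne_zero.mpr (by omega)
        push_cast at this
        convert this using 2 <;> ring_nf
      have h2 : ((m'' : ℂ) + 1) ≠ 0 := by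
        have : ((m'' + 1 : ℕ) : ℂ) ≠ 0 := Nat.cast_ne_zero.mpr (by omega)
        push_cast at this
        exact this
      have h4 : (4 : ℂ) * ((n' : ℂ) + m'' + 1) * ((m'' : ℂ) + 1) ≠ 0 := by
        exact mul_ne_zero (mul_ne_zero (by norm_num) h1) h2
      exact (mul_eq_zero.mp hr).resolve_left h4
    intro n m hnm
    rcases Nat.eq_zero_or_pos m with hm | hm
    swap
    · exact hzero n m hnm hm
    subst hm
    have hn : n = l := by omega
    subst hn
    obtain ⟨hc, hs⟩ := hsum n hl
    have hmem : (n, 0) ∈ cornerPairs n := by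
      simp [cornerPairs]
    have hother : ∀ b ∈ cornerPairs n, b ≠ (n, 0) → a b = 0 := by
      rintro ⟨b1, b2⟩ hb hne
      simp [cornerPairs] at hb
      have hb2 : 1 ≤ b2 := by
        rcases Nat.eq_zero_or_pos b2 with h | h
        · exfalso; apply hne; simp [Prod.ext_iff]; omega
        · exact h
      exact hzero b1 b2 (by omega) hb2
    have hc' : a (n, 0) * (Real.cos ((n : ℝ) * θ₀) : ℂ) = 0 := by
      have hrw := Finset.sum_eq_single_of_mem (s := cornerPairs n)
        (f := fun p : ℕ × ℕ => a p * (Real.cos ((p.1 : ℝ) * θ₀) : ℂ)) (n, 0) hmem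
        (fun b hb hne => by simp [hother b hb hne])
      rw [hrw] at hc
      simpa using hc
    have hs' : ((n : ℕ) : ℂ) * a (n, 0) * (Real.sin ((n : ℝ) * θ₀) : ℂ) = 0 := by
      have hrw := Finset.sum_eq_single_of_mem (s := cornerPairs n)
        (f := fun p : ℕ × ℕ => ((p.1 : ℕ) : ℂ) * a p * (Real.sin ((p.1 : ℝ) * θ₀) : ℂ)) (n, 0) hmem
        (fun b hb hne => by simp [hother b hb hne])
      rw [hrw] at hs
      simpa using hs
    by_contra ha
    have hcos : Real.cos ((n : ℝ) * θ₀) = 0 := by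
      rcases mul_eq_zero.mp hc' with h | h
      · exact absurd h ha
      · exact_mod_cast h
    rcases Nat.eq_zero_or_pos n with hl0 | hl0
    · subst hl0
      simp at hcos
    have hsin : Real.sin ((n : ℝ) * θ₀) = 0 := by
      rcases mul_eq_zero.mp hs' with h | h
      · rcases mul_eq_zero.mp h with h' | h'
        · exact absurd (Nat.cast_eq_zero.mp h') (by omega)
        · exact absurd h' ha
      · exact_mod_cast h
    have := Real.sin_sq_add_cos_sq ((n : ℝ) * θ₀)
    rw [hsin, hcos] at this
    norm_num at this
end

section
/- For every real number t > 0, the limit as n → ∞ (over n ≥ 1) of (2^n · (n−1)! / t^{n−1}) · J_n′(t) equals 1, where J_n′ denotes the derivative of the function J_n. -/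
open Real Filter

/-- Bessel function of the first kind of natural order `n`. -/
noncomputable def besselJ (n : ℕ) (t : ℝ) : ℝ :=
  ∑' p : ℕ, ((-1 : ℝ) ^ p / ((p.factorial : ℝ) * ((n + p).factorial : ℝ))) * (t / 2) ^ (n + 2 * p)

/-- The digamma value `ψ(m+1) = -γ + ∑_{i=1}^m 1/i`. -/
noncomputable def psiNat (m : ℕ) : ℝ :=
  -Real.eulerMascheroniConstant + ∑ i ∈ Finset.range m, (1 : ℝ) / (i + 1)

/-- Bessel function of the second kind of natural order `n`. -/
noncomputable def besselY (n : ℕ) (t : ℝ) : ℝ :=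
  (2 / π) * Real.log (t / 2) * besselJ n t
    - (1 / π) * ∑ m ∈ Finset.range n,
        (((n - m - 1).factorial : ℝ) / (m.factorial : ℝ)) * (t / 2) ^ ((2 * m : ℤ) - n)
    - (1 / π) * ∑' m : ℕ,
        ((-1 : ℝ) ^ m * (psiNat m + psiNat (m + n)) /
          ((m.factorial : ℝ) * ((m + n).factorial : ℝ))) * (t / 2) ^ (2 * m + n)

/-- Hankel function of the first kind of natural order `n`. -/
noncomputable def besselH (n : ℕ) (t : ℝ) : ℂ :=
  (besselJ n t : ℂ) + Complex.I * (besselY n t : ℂ)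

lemma hasDerivAt_termJ (c x : ℝ) (k : ℕ) :
    HasDerivAt (fun y : ℝ => c * (y / 2) ^ k) (c * (k * (x / 2) ^ (k - 1) * (1 / 2))) x := by
  have h : HasDerivAt (fun y : ℝ => y / 2) (1 / 2) x := (hasDerivAt_id x).div_const 2
  exact (h.pow k).const_mul c

lemma summable_besselJ_deriv_bound (n : ℕ) (y : ℝ) :
    Summable (fun p : ℕ => (2 * y) ^ n * (4 * y ^ 2) ^ p / (p.factorial : ℝ)) := by
  simpa [mul_div_assoc] using (Real.summable_pow_div_factorial (4 * y ^ 2)).mul_left ((2 * y) ^ n)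

lemma besselJ_deriv_term_bound (n p : ℕ) {x y : ℝ} (hy : 1 / 2 ≤ y) (hx : |x / 2| ≤ y) :
    |((-1 : ℝ) ^ p / ((p.factorial : ℝ) * ((n + p).factorial : ℝ))) *
        (((n + 2 * p : ℕ) : ℝ) * (x / 2) ^ (n + 2 * p - 1) * (1 / 2))|
      ≤ (2 * y) ^ n * (4 * y ^ 2) ^ p / (p.factorial : ℝ) := by
  have hy0 : (0:ℝ) ≤ y := le_trans (by norm_num) hy
  set k := n + 2 * p with hk
  have h1 : |x / 2| ^ (k - 1) ≤ y ^ (k - 1) := pow_le_pow_left₀ (abs_nonneg _) hx _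
  have h2 : y ^ (k - 1) ≤ 2 * y ^ k := by
    rcases Nat.eq_zero_or_pos k with h | h
    · simp [h]
    · have h4 : y ^ (k - 1) * (1/2) ≤ y ^ (k - 1) * y := by
        apply mul_le_mul_of_nonneg_left hy (by positivity)
      have hyk : y ^ (k - 1) * y = y ^ k := by
        rw [← pow_succ]; congr 1; omega
      nlinarith [pow_nonneg hy0 (k-1)]
  have h3 : (k : ℝ) ≤ 2 ^ k := by
    exact_mod_cast (Nat.lt_two_pow_self (n := k)).le
  have hfac1 : (1:ℝ) ≤ ((n + p).factorial : ℝ) := by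
    exact_mod_cast Nat.one_le_iff_ne_zero.2 (Nat.factorial_ne_zero _)
  have hfacp : (0:ℝ) < (p.factorial : ℝ) := by exact_mod_cast Nat.factorial_pos p
  rw [abs_mul, abs_mul, abs_mul, abs_pow, Nat.abs_cast,
    show |(-1 : ℝ) ^ p / ((p.factorial : ℝ) * ((n + p).factorial : ℝ))|
        = 1 / ((p.factorial : ℝ) * ((n + p).factorial : ℝ)) by
      rw [abs_div, abs_pow, abs_neg, abs_one, one_pow, abs_mul, Nat.abs_cast, Nat.abs_cast]]
  calc 1 / ((p.factorial : ℝ) * ((n + p).factorial : ℝ)) *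
        ((k : ℝ) * |x / 2| ^ (k - 1) * |1 / 2|)
      ≤ (1 / (p.factorial : ℝ)) * ((2:ℝ) ^ k * (2 * y ^ k) * (1 / 2)) := by
        have habs2 : |(1:ℝ) / 2| = 1/2 := by norm_num
        rw [habs2]
        apply mul_le_mul
        · rw [div_le_div_iff₀ (by positivity) hfacp]
          nlinarith
        · apply mul_le_mul_of_nonneg_right _ (by norm_num)
          exact mul_le_mul h3 (le_trans h1 h2) (by positivity) (by positivity)
        · positivity
        · positivity
    _ = (2 * y) ^ n * (4 * y ^ 2) ^ p / (p.factorial : ℝ) := by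
        have h4 : (4:ℝ) ^ p = 2 ^ (2 * p) := by
          rw [show (4:ℝ) = 2 ^ 2 by norm_num, ← pow_mul]
        rw [hk, mul_pow, mul_pow, h4, pow_add]
        field_simp
        ring

lemma besselJ_hasDerivAt (n : ℕ) (t : ℝ) :
    HasDerivAt (besselJ n)
      (∑' p : ℕ, ((-1 : ℝ) ^ p / ((p.factorial : ℝ) * ((n + p).factorial : ℝ))) *
        (((n + 2 * p : ℕ) : ℝ) * (t / 2) ^ (n + 2 * p - 1) * (1 / 2))) t := by
  set y : ℝ := (|t| + 1) / 2 with hydef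
  have hy : (1:ℝ)/2 ≤ y := by
    rw [hydef]
    have := abs_nonneg t
    linarith
  have hy0 : (0:ℝ) < y := lt_of_lt_of_le (by norm_num) hy
  have hmem : t ∈ Metric.ball (0:ℝ) (|t| + 1) := by
    simp only [Metric.mem_ball, Real.dist_eq, sub_zero]
    linarith
  have hball : ∀ x ∈ Metric.ball (0:ℝ) (|t| + 1), |x / 2| ≤ y := by
    intro x hx
    rw [Metric.mem_ball, Real.dist_eq, sub_zero] at hx
    rw [hydef, abs_div, abs_two]
    exact div_le_div_of_nonneg_right hx.le (by norm_num) |>.trans (le_refl _)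
  have hsum0 : Summable (fun p : ℕ =>
      ((-1 : ℝ) ^ p / ((p.factorial : ℝ) * ((n + p).factorial : ℝ))) * (t / 2) ^ (n + 2 * p)) := by
    apply Summable.of_norm_bounded (summable_besselJ_deriv_bound n y)
    intro p
    have h1 : |t / 2| ≤ y := hball t hmem
    have hfac1 : (1:ℝ) ≤ ((n + p).factorial : ℝ) := by
      exact_mod_cast Nat.one_le_iff_ne_zero.2 (Nat.factorial_ne_zero _)
    have hfacp : (0:ℝ) < (p.factorial : ℝ) := by exact_mod_cast Nat.factorial_pos p
    rw [Real.norm_eq_abs, abs_mul, abs_pow, abs_div, abs_pow, abs_neg, abs_one, one_pow,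
      abs_mul, Nat.abs_cast, Nat.abs_cast]
    calc 1 / ((p.factorial : ℝ) * ((n + p).factorial : ℝ)) * |t / 2| ^ (n + 2 * p)
        ≤ 1 / (p.factorial : ℝ) * ((2 * y) ^ n * (4 * y ^ 2) ^ p) := by
          apply mul_le_mul
          · rw [div_le_div_iff₀ (by positivity) hfacp]
            nlinarith
          · calc |t / 2| ^ (n + 2 * p) ≤ y ^ (n + 2 * p) :=
                  pow_le_pow_left₀ (abs_nonneg _) h1 _
              _ ≤ (2 * y) ^ (n + 2 * p) := by
                  apply pow_le_pow_left₀ hy0.le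
                  linarith
              _ = (2 * y) ^ n * (4 * y ^ 2) ^ p := by
                  rw [pow_add, pow_mul]
                  congr 2
                  ring
          · positivity
          · positivity
      _ = (2 * y) ^ n * (4 * y ^ 2) ^ p / (p.factorial : ℝ) := by ring
  have := hasDerivAt_tsum_of_isPreconnected (summable_besselJ_deriv_bound n y)
      Metric.isOpen_ball (convex_ball (0:ℝ) (|t| + 1)).isPreconnected
      (g := fun p x => ((-1 : ℝ) ^ p / ((p.factorial : ℝ) * ((n + p).factorial : ℝ))) * (x / 2) ^ (n + 2 * p))
      (g' := fun p x => ((-1 : ℝ) ^ p / ((p.factorial : ℝ) * ((n + p).factorial : ℝ))) *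
        (((n + 2 * p : ℕ) : ℝ) * (x / 2) ^ (n + 2 * p - 1) * (1 / 2)))
      (fun p x _ => hasDerivAt_termJ _ x _)
      (fun p x hx => by
        rw [Real.norm_eq_abs]
        exact besselJ_deriv_term_bound n p hy (hball x hx))
      hmem hsum0 hmem
  exact this

noncomputable def besselJDT (n p : ℕ) (t : ℝ) : ℝ :=
  ((-1 : ℝ) ^ p / ((p.factorial : ℝ) * ((n + p).factorial : ℝ))) *
    (((n + 2 * p : ℕ) : ℝ) * (t / 2) ^ (n + 2 * p - 1) * (1 / 2))

lemma summable_besselJDT (n : ℕ) (t : ℝ) : Summable (fun p : ℕ => besselJDT n p t) := by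
  set y : ℝ := (|t| + 1) / 2 with hydef
  have hy : (1:ℝ)/2 ≤ y := by
    rw [hydef]; have := abs_nonneg t; linarith
  have hx : |t / 2| ≤ y := by
    rw [hydef, abs_div, abs_two]
    apply div_le_div_of_nonneg_right (by linarith) (by norm_num)
  apply Summable.of_norm_bounded (summable_besselJ_deriv_bound n y)
  intro p
  rw [Real.norm_eq_abs]
  exact besselJ_deriv_term_bound n p hy hx

lemma besselJDT_zero (n : ℕ) (hn : 1 ≤ n) {t : ℝ} (ht : 0 < t) :
    (2 ^ n * ((n - 1).factorial : ℝ) / t ^ (n - 1)) * besselJDT n 0 t = 1 := by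
  obtain ⟨m, rfl⟩ : ∃ m, n = m + 1 := ⟨n - 1, by omega⟩
  simp only [besselJDT, Nat.add_sub_cancel, mul_zero, add_zero, Nat.factorial_zero,
    Nat.factorial_succ, pow_zero, Nat.cast_one]
  have ht' : t ^ m ≠ 0 := by positivity
  have hm : ((m.factorial : ℝ)) ≠ 0 := by exact_mod_cast (Nat.factorial_pos m).ne'
  rw [div_pow]
  push_cast
  field_simp
  ring

lemma besselJDT_bound (n q : ℕ) (hn : 1 ≤ n) (hq : 1 ≤ q) {t : ℝ} (ht : 0 < t) :
    |(2 ^ n * ((n - 1).factorial : ℝ) / t ^ (n - 1)) * besselJDT n q t|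
      ≤ 2 / n * ((t ^ 2 / 4) ^ q / (q.factorial : ℝ)) := by
  have hexp : n + 2 * q - 1 = (n - 1) + 2 * q := by omega
  have hqf : (0:ℝ) < (q.factorial : ℝ) := by exact_mod_cast Nat.factorial_pos q
  have hnqf : (0:ℝ) < ((n + q).factorial : ℝ) := by exact_mod_cast Nat.factorial_pos (n + q)
  have h4 : (4:ℝ) ^ q = 2 ^ (2 * q) := by
    rw [show (4:ℝ) = 2 ^ 2 by norm_num, ← pow_mul]
  have hS : (2 ^ n * ((n - 1).factorial : ℝ) / t ^ (n - 1)) * besselJDT n q t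
      = (-1) ^ q * (((n + 2 * q : ℕ) : ℝ) * ((n - 1).factorial : ℝ) /
          ((q.factorial : ℝ) * ((n + q).factorial : ℝ)) * (t ^ 2 / 4) ^ q) := by
    rw [besselJDT, hexp, pow_add, div_pow, div_pow, div_pow, h4,
      show (2:ℝ) ^ n = 2 ^ (n - 1) * 2 by rw [← pow_succ]; congr 1; omega]
    have ht1 : t ^ (n - 1) ≠ 0 := by positivity
    field_simp
    ring
  rw [hS, abs_mul, abs_pow, abs_neg, abs_one, one_pow, one_mul,
    abs_of_nonneg (by positivity)]
  -- now show the explicit ratio bound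
  have hN : n * ((n + 2 * q) * (n - 1).factorial) ≤ 2 * (n + q).factorial := by
    have h1 : (n - 1).factorial * n ^ q ≤ (n + q - 1).factorial := by
      have := @Nat.factorial_mul_pow_le_factorial (n - 1) q
      rwa [show n - 1 + 1 = n by omega, show n - 1 + q = n + q - 1 by omega] at this
    have h2 : (n + q).factorial = (n + q) * (n + q - 1).factorial := by
      rw [show n + q = (n + q - 1) + 1 by omega, Nat.factorial_succ]
      congr 1
    have h3 : n ≤ n ^ q := Nat.le_self_pow (by omega) n
    calc n * ((n + 2 * q) * (n - 1).factorial)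
        ≤ n ^ q * ((2 * (n + q)) * (n - 1).factorial) := by
          apply Nat.mul_le_mul h3
          apply Nat.mul_le_mul_right
          omega
      _ = 2 * ((n + q) * ((n - 1).factorial * n ^ q)) := by ring
      _ ≤ 2 * ((n + q) * (n + q - 1).factorial) := by
          apply Nat.mul_le_mul_left
          exact Nat.mul_le_mul_left _ h1
      _ = 2 * (n + q).factorial := by rw [h2]
  have hNR : (n:ℝ) * (((n + 2 * q : ℕ):ℝ) * ((n - 1).factorial : ℝ)) ≤ 2 * ((n + q).factorial : ℝ) := by
    exact_mod_cast hN
  have hn0 : (0:ℝ) < (n:ℝ) := by exact_mod_cast hn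
  have hx0 : (0:ℝ) ≤ (t ^ 2 / 4) ^ q := by positivity
  have key : ((n + 2 * q : ℕ):ℝ) * ((n - 1).factorial : ℝ) / ((n + q).factorial : ℝ) ≤ 2 / n := by
    rw [div_le_div_iff₀ hnqf hn0]
    nlinarith [hNR]
  calc ((n + 2 * q : ℕ):ℝ) * ((n - 1).factorial : ℝ) /
        ((q.factorial : ℝ) * ((n + q).factorial : ℝ)) * (t ^ 2 / 4) ^ q
      = (((n + 2 * q : ℕ):ℝ) * ((n - 1).factorial : ℝ) / ((n + q).factorial : ℝ)) *
          ((t ^ 2 / 4) ^ q / (q.factorial : ℝ)) := by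
        field_simp
    _ ≤ 2 / n * ((t ^ 2 / 4) ^ q / (q.factorial : ℝ)) :=
        mul_le_mul_of_nonneg_right key (by positivity)

/-- Asymptotic law `J_n′(t) ≈ t^{n−1} / (2^n (n−1)!)` as `n → ∞` (over `n ≥ 1`),
for every `t > 0`. -/
theorem besselJ_deriv_asymptotic (t : ℝ) (ht : 0 < t) :
    Filter.Tendsto (fun n : ℕ => (2 ^ n * ((n - 1).factorial : ℝ) / t ^ (n - 1)) * deriv (besselJ n) t)
      Filter.atTop (nhds 1) := by
  set x : ℝ := t ^ 2 / 4 with hxdef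
  have hsumx : Summable (fun q : ℕ => x ^ (q + 1) / ((q + 1).factorial : ℝ)) := by
    have := (Real.summable_pow_div_factorial x).comp_injective Nat.succ_injective
    exact this
  set C : ℝ := ∑' q : ℕ, x ^ (q + 1) / ((q + 1).factorial : ℝ) with hCdef
  have hC0 : 0 ≤ C := tsum_nonneg fun q => by positivity
  -- the scaled series
  have heq : ∀ n : ℕ, 1 ≤ n →
      (2 ^ n * ((n - 1).factorial : ℝ) / t ^ (n - 1)) * deriv (besselJ n) t
        = 1 + ∑' q : ℕ, (2 ^ n * ((n - 1).factorial : ℝ) / t ^ (n - 1)) * besselJDT n (q + 1) t := by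
    intro n hn
    have hd : deriv (besselJ n) t = ∑' p : ℕ, besselJDT n p t :=
      (besselJ_hasDerivAt n t).deriv
    rw [hd, ← tsum_mul_left]
    rw [Summable.tsum_eq_zero_add ((summable_besselJDT n t).mul_left _)]
    rw [besselJDT_zero n hn ht]
  -- remainder tends to zero
  have hrem : Tendsto (fun n : ℕ =>
      ∑' q : ℕ, (2 ^ n * ((n - 1).factorial : ℝ) / t ^ (n - 1)) * besselJDT n (q + 1) t)
      atTop (nhds 0) := by
    refine squeeze_zero_norm' (a := fun n : ℕ => 2 * C / n) ?_ ?_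
    · filter_upwards [eventually_ge_atTop 1] with n hn
      have hsummable : Summable (fun q : ℕ =>
          (2 ^ n * ((n - 1).factorial : ℝ) / t ^ (n - 1)) * besselJDT n (q + 1) t) :=
        ((summable_besselJDT n t).mul_left _).comp_injective Nat.succ_injective
      calc ‖∑' q : ℕ, (2 ^ n * ((n - 1).factorial : ℝ) / t ^ (n - 1)) * besselJDT n (q + 1) t‖
          ≤ ∑' q : ℕ, ‖(2 ^ n * ((n - 1).factorial : ℝ) / t ^ (n - 1)) * besselJDT n (q + 1) t‖ :=
            norm_tsum_le_tsum_norm hsummable.norm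
        _ ≤ ∑' q : ℕ, 2 / n * (x ^ (q + 1) / ((q + 1).factorial : ℝ)) := by
            apply Summable.tsum_le_tsum
            · intro q
              exact besselJDT_bound n (q + 1) hn (by omega) ht
            · exact hsummable.norm
            · exact hsumx.mul_left _
        _ = 2 * C / n := by
            rw [tsum_mul_left, hCdef]
            ring
    · have := tendsto_const_div_atTop_nhds_zero_nat (2 * C)
      exact this
  have hmain : Tendsto (fun n : ℕ =>
      1 + ∑' q : ℕ, (2 ^ n * ((n - 1).factorial : ℝ) / t ^ (n - 1)) * besselJDT n (q + 1) t)
      atTop (nhds 1) := by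
    have := hrem.const_add 1
    simpa using this
  apply hmain.congr'
  filter_upwards [eventually_ge_atTop 1] with n hn
  exact (heq n hn).symm
end

section
/- For every real number t > 0, the limit as n → ∞ (over n ≥ 1) of (π · t^{n+1} / (2^n · n!)) · Y_n′(t) equals 1; consequently, the limit as n → ∞ of (π · t^{n+1} / (2^n · n!)) · H_n′(t) equals i, where Y_n′ and H_n′ denote the derivatives of Y_n and H_n. -/
open Real Filter

lemma abs_tsum_le_tsum_of_le {f g : ℕ → ℝ} (h : ∀ p, |f p| ≤ g p) (hg : Summable g) :
    |∑' p, f p| ≤ ∑' p, g p := by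
  have hf : Summable fun p => |f p| := hg.of_nonneg_of_le (fun p => abs_nonneg _) h
  have hf2 : Summable fun p => ‖f p‖ := by
    simp only [Real.norm_eq_abs]; exact hf
  have h1 : ‖∑' p, f p‖ ≤ ∑' p, ‖f p‖ := norm_tsum_le_tsum_norm hf2
  simp only [Real.norm_eq_abs] at h1
  exact h1.trans (Summable.tsum_le_tsum h hf hg)

lemma hasDerivAt_tsum_pow (c : ℕ → ℝ) (e : ℕ → ℕ) {t : ℝ} (ht : 0 < t)
    (hs : Summable fun k => |c k| * (e k) * (t + 1) ^ e k)
    (hs0 : Summable fun k => |c k| * (t + 1) ^ e k) :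
    HasDerivAt (fun y : ℝ => ∑' k, c k * (y / 2) ^ e k)
      (∑' k, c k * ((e k : ℝ) * (t / 2) ^ (e k - 1) * (1 / 2))) t := by
  have hM1 : (1:ℝ) ≤ t + 1 := by linarith
  have hg : ∀ k, ∀ y : ℝ, y ∈ Set.Ioo (-(2*t+2)) (2*t+2) →
      HasDerivAt (fun y : ℝ => c k * (y / 2) ^ e k)
        (c k * ((e k : ℝ) * (y / 2) ^ (e k - 1) * (1 / 2))) y := by
    intro k y _
    have h1 : HasDerivAt (fun y : ℝ => y / 2) (1/2) y := (hasDerivAt_id y).div_const 2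
    have h2 : HasDerivAt (fun z : ℝ => z ^ e k) ((e k : ℝ) * (y/2) ^ (e k - 1)) (y/2) :=
      hasDerivAt_pow (e k) (y/2)
    simpa [mul_assoc] using ((h2.comp y h1).const_mul (c k))
  have hbd : ∀ k, ∀ y : ℝ, y ∈ Set.Ioo (-(2*t+2)) (2*t+2) →
      ‖c k * ((e k : ℝ) * (y / 2) ^ (e k - 1) * (1 / 2))‖ ≤ |c k| * (e k) * (t + 1) ^ e k := by
    intro k y hy
    rw [Set.mem_Ioo] at hy
    have hy' : |y / 2| ≤ t + 1 := by
      rw [abs_div, abs_of_pos (by norm_num : (0:ℝ) < 2), div_le_iff₀ (by norm_num : (0:ℝ) < 2)]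
      cases abs_cases y with
      | inl h => rw [h.1]; linarith [hy.2]
      | inr h => rw [h.1]; linarith [hy.1]
    have h3 : |(y/2) ^ (e k - 1)| ≤ (t+1) ^ e k := by
      rw [abs_pow]
      calc |y/2| ^ (e k - 1) ≤ (t+1) ^ (e k - 1) := pow_le_pow_left₀ (abs_nonneg _) hy' _
        _ ≤ (t+1) ^ e k := pow_le_pow_right₀ hM1 (Nat.sub_le _ _)
    rw [Real.norm_eq_abs, abs_mul, abs_mul, abs_mul]
    have he : |(e k : ℝ)| = (e k : ℝ) := abs_of_nonneg (Nat.cast_nonneg _)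
    rw [he]
    have h6 : (e k : ℝ) * |(y/2) ^ (e k - 1)| ≤ (e k : ℝ) * (t+1) ^ e k :=
      mul_le_mul_of_nonneg_left h3 (Nat.cast_nonneg _)
    have h7 : (0:ℝ) ≤ (e k : ℝ) * |(y/2) ^ (e k - 1)| := by positivity
    have h5 : (e k : ℝ) * |(y/2) ^ (e k - 1)| * |(1:ℝ)/2| ≤ (e k : ℝ) * (t+1) ^ e k := by
      rw [show |(1:ℝ)/2| = 1/2 by norm_num]; linarith
    calc |c k| * ((e k : ℝ) * |(y/2) ^ (e k - 1)| * |(1:ℝ)/2|)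
        ≤ |c k| * ((e k : ℝ) * (t+1) ^ e k) := mul_le_mul_of_nonneg_left h5 (abs_nonneg _)
      _ = |c k| * (e k) * (t+1) ^ e k := by ring
  have hmem : t ∈ Set.Ioo (-(2*t+2)) (2*t+2) := by constructor <;> linarith
  have hsum : Summable fun k => c k * (t / 2) ^ e k := by
    apply hs0.of_norm_bounded
    intro k
    rw [Real.norm_eq_abs, abs_mul, abs_pow]
    gcongr
    rw [abs_div, abs_of_pos ht, abs_of_pos (by norm_num : (0:ℝ) < 2),
      div_le_iff₀ (by norm_num : (0:ℝ) < 2)]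
    linarith
  exact hasDerivAt_tsum_of_isPreconnected hs (isOpen_Ioo) isPreconnected_Ioo hg hbd hmem hsum hmem

lemma cast_le_two_pow (k : ℕ) : (k : ℝ) ≤ 2 ^ k := by
  exact_mod_cast (Nat.lt_two_pow_self : k < 2 ^ k).le

lemma abs_psiNat_le (m : ℕ) : |psiNat m| ≤ 1 + m := by
  have hγ0 : 0 < Real.eulerMascheroniConstant :=
    lt_trans (by norm_num) Real.one_half_lt_eulerMascheroniConstant
  have hγ1 : Real.eulerMascheroniConstant < 1 :=
    lt_trans Real.eulerMascheroniConstant_lt_two_thirds (by norm_num)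
  have hs0 : (0:ℝ) ≤ ∑ i ∈ Finset.range m, (1:ℝ) / (i + 1) :=
    Finset.sum_nonneg fun i _ => by positivity
  have hs1 : ∑ i ∈ Finset.range m, (1:ℝ) / (i + 1) ≤ m := by
    calc ∑ i ∈ Finset.range m, (1:ℝ) / (i + 1) ≤ ∑ i ∈ Finset.range m, (1:ℝ) := by
          apply Finset.sum_le_sum
          intro i _
          rw [div_le_one (by positivity)]
          have : (0:ℝ) ≤ (i:ℝ) := Nat.cast_nonneg i
          linarith
      _ = m := by simp
  rw [psiNat, abs_le]
  constructor <;> [linarith; linarith]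

lemma summable_of_bound {f : ℕ → ℝ} (C r : ℝ)
    (h : ∀ p, ‖f p‖ ≤ C * (r ^ p / p.factorial)) : Summable f :=
  Summable.of_norm_bounded ((Real.summable_pow_div_factorial r).mul_left C) h

lemma factorial_cast_pos (p : ℕ) : (0:ℝ) < p.factorial := by
  exact_mod_cast p.factorial_pos

lemma one_le_factorial_cast (p : ℕ) : (1:ℝ) ≤ p.factorial := by
  exact_mod_cast p.factorial_pos

/-- The common per-term bound: `k * M^k / (p! * q!) ≤ (2M)^k / p!` for `M ≥ 1`. -/
lemma key_term_bound (p q k : ℕ) {M : ℝ} (hM : 1 ≤ M) :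
    (1 / ((p.factorial : ℝ) * q.factorial)) * k * M ^ k ≤ (2 * M) ^ k / p.factorial := by
  have hM0 : (0:ℝ) < M := lt_of_lt_of_le one_pos hM
  have h1 : (1:ℝ) / ((p.factorial : ℝ) * q.factorial) ≤ 1 / p.factorial := by
    apply div_le_div_of_nonneg_left one_pos.le (factorial_cast_pos p)
    calc (p.factorial : ℝ) = p.factorial * 1 := (mul_one _).symm
      _ ≤ p.factorial * q.factorial := by
          apply mul_le_mul_of_nonneg_left (one_le_factorial_cast q) (factorial_cast_pos p).le
  have h2 : (k:ℝ) * M ^ k ≤ (2 * M) ^ k := by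
    rw [mul_pow]
    exact mul_le_mul_of_nonneg_right (cast_le_two_pow k) (pow_nonneg hM0.le k)
  calc (1 / ((p.factorial : ℝ) * q.factorial)) * k * M ^ k
      = (1 / ((p.factorial : ℝ) * q.factorial)) * ((k:ℝ) * M ^ k) := by ring
    _ ≤ (1 / p.factorial) * ((2*M) ^ k) := by
        apply mul_le_mul h1 h2 (by positivity) (by positivity)
    _ = (2 * M) ^ k / p.factorial := by ring

lemma key_term_bound' (p q k : ℕ) {M : ℝ} (hM : 1 ≤ M) :
    (1 / ((p.factorial : ℝ) * q.factorial)) * M ^ k ≤ (2 * M) ^ k / p.factorial := by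
  have hM0 : (0:ℝ) < M := lt_of_lt_of_le one_pos hM
  have h1 : (1:ℝ) / ((p.factorial : ℝ) * q.factorial) ≤ 1 / p.factorial := by
    apply div_le_div_of_nonneg_left one_pos.le (factorial_cast_pos p)
    calc (p.factorial : ℝ) = p.factorial * 1 := (mul_one _).symm
      _ ≤ p.factorial * q.factorial := by
          apply mul_le_mul_of_nonneg_left (one_le_factorial_cast q) (factorial_cast_pos p).le
  have h2 : M ^ k ≤ (2 * M) ^ k := by
    apply pow_le_pow_left₀ hM0.le; linarith
  calc (1 / ((p.factorial : ℝ) * q.factorial)) * M ^ k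
      ≤ (1 / p.factorial) * ((2*M) ^ k) := by
        apply mul_le_mul h1 h2 (by positivity) (by positivity)
    _ = (2 * M) ^ k / p.factorial := by ring

lemma pow_split (M : ℝ) (n p : ℕ) : M ^ (n + 2*p) = M ^ n * (M^2) ^ p := by
  rw [pow_add, pow_mul]

lemma abs_cJ (n p : ℕ) : |(-1:ℝ)^p / ((p.factorial : ℝ) * (n+p).factorial)|
    = 1 / ((p.factorial : ℝ) * (n+p).factorial) := by
  rw [abs_div, abs_pow, abs_neg, abs_one, one_pow, abs_of_pos]
  positivity

noncomputable def Jd (n : ℕ) (t : ℝ) : ℝ :=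
  ∑' p : ℕ, ((-1 : ℝ) ^ p / ((p.factorial : ℝ) * ((n + p).factorial : ℝ))) *
    (((n + 2 * p : ℕ) : ℝ) * (t / 2) ^ (n + 2 * p - 1) * (1 / 2))

noncomputable def S2d (n : ℕ) (t : ℝ) : ℝ :=
  ∑' m : ℕ, ((-1 : ℝ) ^ m * (psiNat m + psiNat (m + n)) /
      ((m.factorial : ℝ) * ((m + n).factorial : ℝ))) *
    (((2 * m + n : ℕ) : ℝ) * (t / 2) ^ (2 * m + n - 1) * (1 / 2))

noncomputable def S1d (n : ℕ) (t : ℝ) : ℝ :=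
  ∑ m ∈ Finset.range n, (((n - m - 1).factorial : ℝ) / (m.factorial : ℝ)) *
    ((((2 * m : ℤ) - n : ℤ) : ℝ) * (t / 2) ^ ((2 * m : ℤ) - n - 1) * (1 / 2))

lemma abs_cY (n m : ℕ) : |(-1:ℝ)^m * (psiNat m + psiNat (m+n)) /
    ((m.factorial : ℝ) * (m+n).factorial)| ≤
    (2 + (2*m+n : ℕ)) * (1 / ((m.factorial : ℝ) * (m+n).factorial)) := by
  rw [abs_div, abs_mul, abs_pow, abs_neg, abs_one, one_pow, one_mul,
    abs_of_pos (show (0:ℝ) < (m.factorial : ℝ) * (m+n).factorial by positivity)]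
  rw [div_le_iff₀ (by positivity)]
  have h1 : |psiNat m + psiNat (m+n)| ≤ 2 + (2*m+n:ℕ) := by
    calc |psiNat m + psiNat (m+n)| ≤ |psiNat m| + |psiNat (m+n)| := abs_add_le _ _
      _ ≤ (1 + m) + (1 + ((m+n : ℕ) : ℝ)) := add_le_add (abs_psiNat_le m) (abs_psiNat_le (m+n))
      _ = 2 + (2*m+n:ℕ) := by push_cast; ring
  calc |psiNat m + psiNat (m+n)| ≤ 2 + (2*m+n:ℕ) := h1
    _ = (2 + (2*m+n:ℕ)) * (1 / ((m.factorial : ℝ) * (m+n).factorial)) *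
        ((m.factorial : ℝ) * (m+n).factorial) := by
        field_simp

lemma sumJ_hs (n : ℕ) {M : ℝ} (hM : 1 ≤ M) :
    Summable fun p : ℕ => |(-1:ℝ)^p / ((p.factorial : ℝ) * (n+p).factorial)| *
      ((n + 2*p : ℕ) : ℝ) * M ^ (n + 2*p) := by
  apply summable_of_bound ((2*M)^n) ((2*M)^2)
  intro p
  rw [Real.norm_eq_abs]
  have h0 : (0:ℝ) < M := lt_of_lt_of_le one_pos hM
  rw [abs_of_nonneg (by positivity), abs_cJ]
  calc 1 / ((p.factorial : ℝ) * (n+p).factorial) * ((n + 2*p : ℕ) : ℝ) * M ^ (n + 2*p)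
      ≤ (2*M) ^ (n + 2*p) / p.factorial := key_term_bound p (n+p) (n+2*p) hM
    _ = (2*M)^n * (((2*M)^2) ^ p / p.factorial) := by rw [pow_split]; ring

lemma sumJ_hs0 (n : ℕ) {M : ℝ} (hM : 1 ≤ M) :
    Summable fun p : ℕ => |(-1:ℝ)^p / ((p.factorial : ℝ) * (n+p).factorial)| *
      M ^ (n + 2*p) := by
  apply summable_of_bound ((2*M)^n) ((2*M)^2)
  intro p
  rw [Real.norm_eq_abs]
  have h0 : (0:ℝ) < M := lt_of_lt_of_le one_pos hM
  rw [abs_of_nonneg (by positivity), abs_cJ]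
  calc 1 / ((p.factorial : ℝ) * (n+p).factorial) * M ^ (n + 2*p)
      ≤ (2*M) ^ (n + 2*p) / p.factorial := key_term_bound' p (n+p) (n+2*p) hM
    _ = (2*M)^n * (((2*M)^2) ^ p / p.factorial) := by rw [pow_split]; ring

lemma besselJ_hasDerivAt_s9 (n : ℕ) {t : ℝ} (ht : 0 < t) :
    HasDerivAt (besselJ n) (Jd n t) t := by
  have h : besselJ n = fun y : ℝ => ∑' p : ℕ,
      ((-1 : ℝ) ^ p / ((p.factorial : ℝ) * ((n + p).factorial : ℝ))) * (y / 2) ^ (n + 2 * p) :=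
    rfl
  rw [h, Jd]
  exact hasDerivAt_tsum_pow _ _ ht (sumJ_hs n (by linarith)) (sumJ_hs0 n (by linarith))

lemma cast_add_two_le (k : ℕ) : (k : ℝ) + 2 ≤ 2 * 2 ^ k := by
  have h : (k + 2 : ℕ) ≤ 2 ^ (k+1) := (Nat.lt_two_pow_self : k+1 < 2^(k+1))
  have h2 : ((k + 2 : ℕ) : ℝ) ≤ ((2 ^ (k+1) : ℕ) : ℝ) := by exact_mod_cast h
  push_cast at h2
  rw [pow_succ] at h2
  linarith

lemma key_term_bound2 (p q k : ℕ) {M : ℝ} (hM : 1 ≤ M) :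
    (2 + (k:ℝ)) * (1 / ((p.factorial : ℝ) * q.factorial)) * ((k:ℝ) * M ^ k) ≤
      2 * ((4*M) ^ k / p.factorial) := by
  have hM0 : (0:ℝ) < M := lt_of_lt_of_le one_pos hM
  have h1 : (1:ℝ) / ((p.factorial : ℝ) * q.factorial) ≤ 1 / p.factorial := by
    apply div_le_div_of_nonneg_left one_pos.le (factorial_cast_pos p)
    calc (p.factorial : ℝ) = p.factorial * 1 := (mul_one _).symm
      _ ≤ p.factorial * q.factorial :=
          mul_le_mul_of_nonneg_left (one_le_factorial_cast q) (factorial_cast_pos p).le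
  have h2 : (2 + (k:ℝ)) * (k:ℝ) ≤ 2 * 4 ^ k := by
    have a1 : (k:ℝ) + 2 ≤ 2 * 2 ^ k := cast_add_two_le k
    have a2 : (k:ℝ) ≤ 2 ^ k := cast_le_two_pow k
    have a3 : (0:ℝ) ≤ (k:ℝ) := Nat.cast_nonneg k
    have a4 : (4:ℝ) ^ k = 2 ^ k * 2 ^ k := by
      rw [← mul_pow]; norm_num
    nlinarith [pow_nonneg (by norm_num : (0:ℝ) ≤ 2) k]
  have h3 : (2 + (k:ℝ)) * (k:ℝ) * M ^ k ≤ 2 * (4*M) ^ k := by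
    rw [mul_pow]
    calc (2 + (k:ℝ)) * (k:ℝ) * M ^ k ≤ 2 * 4 ^ k * M ^ k :=
          mul_le_mul_of_nonneg_right h2 (pow_nonneg hM0.le k)
      _ = 2 * (4 ^ k * M ^ k) := by ring
  calc (2 + (k:ℝ)) * (1 / ((p.factorial : ℝ) * q.factorial)) * ((k:ℝ) * M ^ k)
      = (1 / ((p.factorial : ℝ) * q.factorial)) * ((2 + (k:ℝ)) * (k:ℝ) * M ^ k) := by ring
    _ ≤ (1 / (p.factorial : ℝ)) * (2 * (4*M) ^ k) := by
        apply mul_le_mul h1 h3 (by positivity) (by positivity)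
    _ = 2 * ((4*M) ^ k / p.factorial) := by ring

lemma key_term_bound2' (p q k : ℕ) {M : ℝ} (hM : 1 ≤ M) :
    (2 + (k:ℝ)) * (1 / ((p.factorial : ℝ) * q.factorial)) * M ^ k ≤
      2 * ((4*M) ^ k / p.factorial) := by
  have hM0 : (0:ℝ) < M := lt_of_lt_of_le one_pos hM
  have h1 : (1:ℝ) / ((p.factorial : ℝ) * q.factorial) ≤ 1 / p.factorial := by
    apply div_le_div_of_nonneg_left one_pos.le (factorial_cast_pos p)
    calc (p.factorial : ℝ) = p.factorial * 1 := (mul_one _).symm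
      _ ≤ p.factorial * q.factorial :=
          mul_le_mul_of_nonneg_left (one_le_factorial_cast q) (factorial_cast_pos p).le
  have h3 : (2 + (k:ℝ)) * M ^ k ≤ 2 * (4*M) ^ k := by
    have a1 : (k:ℝ) + 2 ≤ 2 * 2 ^ k := cast_add_two_le k
    have a2 : (2:ℝ) ^ k * M ^ k ≤ (4*M) ^ k := by
      rw [mul_pow]
      exact mul_le_mul_of_nonneg_right
        (pow_le_pow_left₀ (by norm_num) (by norm_num) k) (pow_nonneg hM0.le k)
    have a3 : (0:ℝ) ≤ M ^ k := pow_nonneg hM0.le k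
    nlinarith [pow_nonneg (by norm_num : (0:ℝ) ≤ 2) k]
  calc (2 + (k:ℝ)) * (1 / ((p.factorial : ℝ) * q.factorial)) * M ^ k
      = (1 / ((p.factorial : ℝ) * q.factorial)) * ((2 + (k:ℝ)) * M ^ k) := by ring
    _ ≤ (1 / (p.factorial : ℝ)) * (2 * (4*M) ^ k) := by
        apply mul_le_mul h1 h3 (by positivity) (by positivity)
    _ = 2 * ((4*M) ^ k / p.factorial) := by ring

lemma sumY_hs (n : ℕ) {M : ℝ} (hM : 1 ≤ M) :
    Summable fun m : ℕ => |(-1:ℝ)^m * (psiNat m + psiNat (m+n)) /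
      ((m.factorial : ℝ) * (m+n).factorial)| * ((2*m + n : ℕ) : ℝ) * M ^ (2*m + n) := by
  apply summable_of_bound (2 * (4*M)^n) ((4*M)^2)
  intro m
  rw [Real.norm_eq_abs]
  have h0 : (0:ℝ) < M := lt_of_lt_of_le one_pos hM
  rw [abs_of_nonneg (by positivity)]
  calc |(-1:ℝ)^m * (psiNat m + psiNat (m+n)) / ((m.factorial : ℝ) * (m+n).factorial)| *
        ((2*m + n : ℕ) : ℝ) * M ^ (2*m + n)
      ≤ ((2 + ((2*m+n : ℕ):ℝ)) * (1 / ((m.factorial : ℝ) * (m+n).factorial)) *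
        ((2*m + n : ℕ) : ℝ)) * M ^ (2*m + n) := by
        apply mul_le_mul_of_nonneg_right _ (by positivity)
        exact mul_le_mul_of_nonneg_right (abs_cY n m) (Nat.cast_nonneg _)
    _ = (2 + ((2*m+n : ℕ):ℝ)) * (1 / ((m.factorial : ℝ) * (m+n).factorial)) *
        (((2*m + n : ℕ) : ℝ) * M ^ (2*m + n)) := by ring
    _ ≤ 2 * ((4*M) ^ (2*m+n) / m.factorial) := key_term_bound2 m (m+n) (2*m+n) hM
    _ = 2 * (4*M)^n * (((4*M)^2) ^ m / m.factorial) := by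
        rw [show 2*m+n = n + 2*m by ring, pow_split]; ring

lemma sumY_hs0 (n : ℕ) {M : ℝ} (hM : 1 ≤ M) :
    Summable fun m : ℕ => |(-1:ℝ)^m * (psiNat m + psiNat (m+n)) /
      ((m.factorial : ℝ) * (m+n).factorial)| * M ^ (2*m + n) := by
  apply summable_of_bound (2 * (4*M)^n) ((4*M)^2)
  intro m
  rw [Real.norm_eq_abs]
  have h0 : (0:ℝ) < M := lt_of_lt_of_le one_pos hM
  rw [abs_of_nonneg (by positivity)]
  calc |(-1:ℝ)^m * (psiNat m + psiNat (m+n)) / ((m.factorial : ℝ) * (m+n).factorial)| *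
        M ^ (2*m + n)
      ≤ ((2 + ((2*m+n : ℕ):ℝ)) * (1 / ((m.factorial : ℝ) * (m+n).factorial))) * M ^ (2*m + n) :=
        mul_le_mul_of_nonneg_right ((abs_cY n m).trans (le_of_eq (by push_cast; ring)))
          (by positivity)
    _ ≤ 2 * ((4*M) ^ (2*m+n) / m.factorial) := key_term_bound2' m (m+n) (2*m+n) hM
    _ = 2 * (4*M)^n * (((4*M)^2) ^ m / m.factorial) := by
        rw [show 2*m+n = n + 2*m by ring, pow_split]; ring

lemma S2_hasDerivAt (n : ℕ) {t : ℝ} (ht : 0 < t) :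
    HasDerivAt (fun y : ℝ => ∑' m : ℕ, ((-1 : ℝ) ^ m * (psiNat m + psiNat (m + n)) /
        ((m.factorial : ℝ) * ((m + n).factorial : ℝ))) * (y / 2) ^ (2 * m + n))
      (S2d n t) t := by
  rw [S2d]
  exact hasDerivAt_tsum_pow _ _ ht (sumY_hs n (by linarith)) (sumY_hs0 n (by linarith))

lemma S1_hasDerivAt (n : ℕ) {t : ℝ} (ht : 0 < t) :
    HasDerivAt (fun y : ℝ => ∑ m ∈ Finset.range n,
        (((n - m - 1).factorial : ℝ) / (m.factorial : ℝ)) * (y / 2) ^ ((2 * m : ℤ) - n))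
      (S1d n t) t := by
  rw [S1d]
  apply HasDerivAt.fun_sum
  intro m _
  have h1 : HasDerivAt (fun y : ℝ => y / 2) (1/2) t := (hasDerivAt_id t).div_const 2
  have h2 : HasDerivAt (fun z : ℝ => z ^ ((2 * m : ℤ) - n))
      ((((2 * m : ℤ) - n : ℤ) : ℝ) * (t/2) ^ ((2 * m : ℤ) - n - 1)) (t/2) :=
    hasDerivAt_zpow _ _ (Or.inl (by positivity))
  have h3 := (h2.comp t h1).const_mul (((n - m - 1).factorial : ℝ) / (m.factorial : ℝ))
  exact h3

lemma besselY_hasDerivAt (n : ℕ) {t : ℝ} (ht : 0 < t) :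
    HasDerivAt (besselY n)
      ((2 / π) * ((t/2)⁻¹ * (1/2)) * besselJ n t + (2 / π) * Real.log (t/2) * Jd n t
        - (1 / π) * S1d n t - (1 / π) * S2d n t) t := by
  have hlog : HasDerivAt (fun y : ℝ => Real.log (y / 2)) ((t/2)⁻¹ * (1/2)) t :=
    (Real.hasDerivAt_log (by positivity)).comp t ((hasDerivAt_id t).div_const 2)
  have hlog2 : HasDerivAt (fun y : ℝ => (2 / π) * Real.log (y / 2))
      ((2 / π) * ((t/2)⁻¹ * (1/2))) t := hlog.const_mul _
  have hprod := hlog2.mul (besselJ_hasDerivAt_s9 n ht)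
  have hS1 := (S1_hasDerivAt n ht).const_mul (1 / π)
  have hS2 := (S2_hasDerivAt n ht).const_mul (1 / π)
  have h := (hprod.sub hS1).sub hS2
  have hfun : besselY n = fun y : ℝ =>
      (2 / π) * Real.log (y / 2) * besselJ n y
        - (1 / π) * ∑ m ∈ Finset.range n,
            (((n - m - 1).factorial : ℝ) / (m.factorial : ℝ)) * (y / 2) ^ ((2 * m : ℤ) - n)
        - (1 / π) * ∑' m : ℕ,
            ((-1 : ℝ) ^ m * (psiNat m + psiNat (m + n)) /
              ((m.factorial : ℝ) * ((m + n).factorial : ℝ))) * (y / 2) ^ (2 * m + n) := rfl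
  rw [hfun]
  exact h

lemma inv_factorial_bound (n p : ℕ) :
    (1:ℝ) / ((p.factorial:ℝ) * (n+p).factorial) ≤ 1 / ((n.factorial:ℝ) * p.factorial) := by
  apply div_le_div_of_nonneg_left one_pos.le (by positivity)
  have h := Nat.le_of_dvd (n+p).factorial_pos (Nat.factorial_mul_factorial_dvd_factorial_add n p)
  have hc : ((n.factorial * p.factorial : ℕ):ℝ) ≤ ((n+p).factorial : ℝ) := by exact_mod_cast h
  push_cast at hc
  nlinarith [one_le_factorial_cast p, factorial_cast_pos p, factorial_cast_pos n]

lemma tendsto_AJ {t : ℝ} (ht : 0 < t) :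
    Filter.Tendsto (fun n : ℕ => (π * t^(n+1) / (2^n * (n.factorial:ℝ))) * besselJ n t)
      Filter.atTop (nhds 0) := by
  have hx0 : (0:ℝ) < t/2 := by positivity
  set E := ∑' p:ℕ, ((t/2)^2)^p / (p.factorial:ℝ) with hE
  have hEsum : Summable fun p:ℕ => ((t/2)^2)^p/(p.factorial:ℝ) :=
    Real.summable_pow_div_factorial _
  have hE0 : 0 ≤ E := tsum_nonneg (fun p => by positivity)
  apply squeeze_zero_norm (a := fun n => (π*t*E) * (((t/2)^2)^n / (n.factorial:ℝ)))
  · intro n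
    have hsum2 : Summable fun p:ℕ => ((t/2)^n/(n.factorial:ℝ)) * (((t/2)^2)^p/(p.factorial:ℝ)) :=
      hEsum.mul_left _
    have hJb : |besselJ n t| ≤ ((t/2)^n/(n.factorial:ℝ)) * E := by
      rw [besselJ]
      calc |∑' p:ℕ, ((-1:ℝ)^p / ((p.factorial:ℝ) * (n+p).factorial)) * (t/2)^(n+2*p)|
          ≤ ∑' p:ℕ, ((t/2)^n/(n.factorial:ℝ)) * (((t/2)^2)^p/(p.factorial:ℝ)) := by
            apply abs_tsum_le_tsum_of_le _ hsum2
            intro p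
            rw [abs_mul, abs_cJ, abs_pow, abs_of_pos hx0, pow_split]
            calc 1 / ((p.factorial:ℝ) * (n+p).factorial) * ((t/2)^n * ((t/2)^2)^p)
                ≤ 1 / ((n.factorial:ℝ) * p.factorial) * ((t/2)^n * ((t/2)^2)^p) :=
                  mul_le_mul_of_nonneg_right (inv_factorial_bound n p) (by positivity)
              _ = ((t/2)^n/(n.factorial:ℝ)) * (((t/2)^2)^p/(p.factorial:ℝ)) := by ring
        _ = ((t/2)^n/(n.factorial:ℝ)) * E := tsum_mul_left
    rw [Real.norm_eq_abs, abs_mul]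
    have hA : |π * t^(n+1) / (2^n * (n.factorial:ℝ))| = π * t^(n+1) / (2^n * (n.factorial:ℝ)) :=
      abs_of_pos (by positivity)
    rw [hA]
    calc π * t^(n+1) / (2^n * (n.factorial:ℝ)) * |besselJ n t|
        ≤ π * t^(n+1) / (2^n * (n.factorial:ℝ)) * (((t/2)^n/(n.factorial:ℝ)) * E) :=
          mul_le_mul_of_nonneg_left hJb (by positivity)
      _ = (π*t*E) * (((t/2)^2)^n / ((n.factorial:ℝ) * (n.factorial:ℝ))) := by
          field_simp
          rw [div_pow, div_pow]
          rw [show ((2:ℝ)^2)^n = 2^n * 2^n by rw [← pow_mul, two_mul, pow_add]]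
          field_simp
          ring
      _ ≤ (π*t*E) * (((t/2)^2)^n / (n.factorial:ℝ)) := by
          apply mul_le_mul_of_nonneg_left _ (by positivity)
          apply div_le_div_of_nonneg_left (by positivity) (factorial_cast_pos n)
          nlinarith [one_le_factorial_cast n, factorial_cast_pos n]
  · have h := (FloorSemiring.tendsto_pow_div_factorial_atTop ((t/2)^2)).const_mul (π*t*E)
    simpa using h

lemma inv_factorial_bound' (n m : ℕ) :
    (1:ℝ) / ((m.factorial:ℝ) * (m+n).factorial) ≤ 1 / ((n.factorial:ℝ) * m.factorial) := by
  rw [add_comm m n]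
  exact inv_factorial_bound n m

lemma tendsto_AJd {t : ℝ} (ht : 0 < t) :
    Filter.Tendsto (fun n : ℕ => (π * t^(n+1) / (2^n * (n.factorial:ℝ))) * Jd n t)
      Filter.atTop (nhds 0) := by
  have hx0 : (0:ℝ) < t/2 := by positivity
  set E := ∑' p:ℕ, (t^2)^p / (p.factorial:ℝ) with hE
  have hEsum : Summable fun p:ℕ => (t^2)^p/(p.factorial:ℝ) := Real.summable_pow_div_factorial _
  have hE0 : 0 ≤ E := tsum_nonneg (fun p => by positivity)
  apply squeeze_zero_norm' (a := fun n => (π*E) * ((t^2/2)^n / (n.factorial:ℝ)))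
  · rw [Filter.eventually_atTop]
    refine ⟨1, fun n hn => ?_⟩
    obtain ⟨k, rfl⟩ : ∃ k, n = 1 + k := ⟨n - 1, by omega⟩
    have hexp : ∀ p:ℕ, 1 + k + 2*p - 1 = k + 2*p := fun p => by omega
    have hsum2 : Summable fun p:ℕ => (t^k/((1+k).factorial:ℝ)) * ((t^2)^p/(p.factorial:ℝ)) :=
      hEsum.mul_left _
    have hJb : |Jd (1+k) t| ≤ (t^k/((1+k).factorial:ℝ)) * E := by
      rw [Jd]
      simp only [hexp]
      calc |∑' p:ℕ, ((-1:ℝ)^p / ((p.factorial:ℝ) * (1+k+p).factorial)) *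
            (((1+k+2*p : ℕ):ℝ) * (t/2)^(k+2*p) * (1/2))|
          ≤ ∑' p:ℕ, (t^k/((1+k).factorial:ℝ)) * ((t^2)^p/(p.factorial:ℝ)) := by
            apply abs_tsum_le_tsum_of_le _ hsum2
            intro p
            rw [abs_mul, abs_cJ]
            have habs : |((1+k+2*p : ℕ):ℝ) * (t/2)^(k+2*p) * (1/2)| =
                ((1+k+2*p : ℕ):ℝ) * (t/2)^(k+2*p) * (1/2) := abs_of_nonneg (by positivity)
            rw [habs]
            have h2p : ((1+k+2*p : ℕ):ℝ) * (1/2) ≤ 2^(k+2*p) := by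
              have := cast_le_two_pow (1+k+2*p)
              rw [show 1+k+2*p = (k+2*p)+1 by ring, pow_succ] at this
              push_cast at this ⊢
              linarith
            calc 1 / ((p.factorial:ℝ) * (1+k+p).factorial) *
                  (((1+k+2*p : ℕ):ℝ) * (t/2)^(k+2*p) * (1/2))
                = (1 / ((p.factorial:ℝ) * (1+k+p).factorial)) *
                  ((((1+k+2*p : ℕ):ℝ) * (1/2)) * (t/2)^(k+2*p)) := by ring
              _ ≤ (1 / (((1+k).factorial:ℝ) * p.factorial)) * (2^(k+2*p) * (t/2)^(k+2*p)) := by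
                  apply mul_le_mul (inv_factorial_bound (1+k) p)
                    (mul_le_mul_of_nonneg_right h2p (by positivity)) (by positivity)
                    (by positivity)
              _ = (t^k/((1+k).factorial:ℝ)) * ((t^2)^p/(p.factorial:ℝ)) := by
                  rw [← mul_pow]
                  rw [show (2:ℝ) * (t/2) = t by ring, pow_split t k p]
                  ring
        _ = (t^k/((1+k).factorial:ℝ)) * E := tsum_mul_left
    rw [Real.norm_eq_abs, abs_mul,
      abs_of_pos (show (0:ℝ) < π * t^(1+k+1) / (2^(1+k) * ((1+k).factorial:ℝ)) by positivity)]
    calc π * t^(1+k+1) / (2^(1+k) * ((1+k).factorial:ℝ)) * |Jd (1+k) t|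
        ≤ π * t^(1+k+1) / (2^(1+k) * ((1+k).factorial:ℝ)) *
          ((t^k/((1+k).factorial:ℝ)) * E) := mul_le_mul_of_nonneg_left hJb (by positivity)
      _ = (π*E) * ((t^2/2)^(1+k) / (((1+k).factorial:ℝ) * ((1+k).factorial:ℝ))) := by
          field_simp
          have h2k : (1/2:ℝ)^k * 2^k = 1 := by rw [← mul_pow]; norm_num
          linear_combination (-(t^2*t^(k*2)*E)) * h2k
      _ ≤ (π*E) * ((t^2/2)^(1+k) / ((1+k).factorial:ℝ)) := by
          apply mul_le_mul_of_nonneg_left _ (by positivity)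
          apply div_le_div_of_nonneg_left (by positivity) (factorial_cast_pos _)
          nlinarith [one_le_factorial_cast (1+k), factorial_cast_pos (1+k)]
  · simpa using (FloorSemiring.tendsto_pow_div_factorial_atTop (t^2/2)).const_mul (π*E)

lemma two_add_mul_le (k : ℕ) : (2 + (k:ℝ)) * (k:ℝ) ≤ 2 * 4 ^ k := by
  have a1 : (k:ℝ) + 2 ≤ 2 * 2 ^ k := cast_add_two_le k
  have a2 : (k:ℝ) ≤ 2 ^ k := cast_le_two_pow k
  have a3 : (0:ℝ) ≤ (k:ℝ) := Nat.cast_nonneg k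
  have a4 : (4:ℝ) ^ k = 2 ^ k * 2 ^ k := by rw [← mul_pow]; norm_num
  nlinarith [pow_nonneg (by norm_num : (0:ℝ) ≤ 2) k]

lemma tendsto_AS2d {t : ℝ} (ht : 0 < t) :
    Filter.Tendsto (fun n : ℕ => (π * t^(n+1) / (2^n * (n.factorial:ℝ))) * S2d n t)
      Filter.atTop (nhds 0) := by
  have hx0 : (0:ℝ) < t/2 := by positivity
  set E := ∑' p:ℕ, (4*t^2)^p / (p.factorial:ℝ) with hE
  have hEsum : Summable fun p:ℕ => (4*t^2)^p/(p.factorial:ℝ) := Real.summable_pow_div_factorial _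
  have hE0 : 0 ≤ E := tsum_nonneg (fun p => by positivity)
  apply squeeze_zero_norm' (a := fun n => (2*π*E) * ((t^2)^n / (n.factorial:ℝ)))
  · rw [Filter.eventually_atTop]
    refine ⟨1, fun n hn => ?_⟩
    obtain ⟨k, rfl⟩ : ∃ k, n = 1 + k := ⟨n - 1, by omega⟩
    have hexp : ∀ m:ℕ, 2*m + (1+k) - 1 = 2*m + k := fun m => by omega
    have hsum2 : Summable fun m:ℕ =>
        ((4*(2*t)^k)/(((1+k).factorial:ℝ))) * ((4*t^2)^m/(m.factorial:ℝ)) := hEsum.mul_left _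
    have hJb : |S2d (1+k) t| ≤ ((4*(2*t)^k)/(((1+k).factorial:ℝ))) * E := by
      rw [S2d]
      simp only [hexp]
      calc |∑' m:ℕ, ((-1:ℝ)^m * (psiNat m + psiNat (m+(1+k))) /
            ((m.factorial:ℝ) * (m+(1+k)).factorial)) *
            (((2*m+(1+k) : ℕ):ℝ) * (t/2)^(2*m+k) * (1/2))|
          ≤ ∑' m:ℕ, ((4*(2*t)^k)/(((1+k).factorial:ℝ))) * ((4*t^2)^m/(m.factorial:ℝ)) := by
            apply abs_tsum_le_tsum_of_le _ hsum2
            intro m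
            rw [abs_mul]
            have habs : |((2*m+(1+k) : ℕ):ℝ) * (t/2)^(2*m+k) * (1/2)| =
                ((2*m+(1+k) : ℕ):ℝ) * (t/2)^(2*m+k) * (1/2) := abs_of_nonneg (by positivity)
            rw [habs]
            calc |(-1:ℝ)^m * (psiNat m + psiNat (m+(1+k))) /
                  ((m.factorial:ℝ) * (m+(1+k)).factorial)| *
                  (((2*m+(1+k) : ℕ):ℝ) * (t/2)^(2*m+k) * (1/2))
                ≤ ((2 + ((2*m+(1+k) : ℕ):ℝ)) * (1 / ((m.factorial:ℝ) * (m+(1+k)).factorial))) *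
                  (((2*m+(1+k) : ℕ):ℝ) * (t/2)^(2*m+k) * (1/2)) :=
                  mul_le_mul_of_nonneg_right (abs_cY (1+k) m) (by positivity)
              _ = ((2 + ((2*m+(1+k) : ℕ):ℝ)) * ((2*m+(1+k) : ℕ):ℝ) * (1/2)) *
                  ((1 / ((m.factorial:ℝ) * (m+(1+k)).factorial)) * (t/2)^(2*m+k)) := by ring
              _ ≤ (4 ^ (2*m+(1+k))) *
                  ((1 / (((1+k).factorial:ℝ) * m.factorial)) * (t/2)^(2*m+k)) := by
                  apply mul_le_mul
                  · have := two_add_mul_le (2*m+(1+k))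
                    linarith
                  · exact mul_le_mul_of_nonneg_right (inv_factorial_bound' (1+k) m)
                      (by positivity)
                  · positivity
                  · positivity
              _ = ((4*(2*t)^k)/(((1+k).factorial:ℝ))) * ((4*t^2)^m/(m.factorial:ℝ)) := by
                  have key : (4:ℝ)^(2*m+k) * (t/2)^(2*m+k) = (2*t)^k * (4*t^2)^m := by
                    rw [← mul_pow, show (4:ℝ)*(t/2) = 2*t by ring,
                      show 2*m+k = k+2*m by ring, pow_split,
                      show ((2*t):ℝ)^2 = 4*t^2 by ring]
                  rw [show 2*m+(1+k) = (2*m+k)+1 by ring, pow_succ,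
                    show (4:ℝ)^(2*m+k) * 4 * ((1 / (((1+k).factorial:ℝ) * m.factorial)) *
                        (t/2)^(2*m+k)) = 4 * ((4:ℝ)^(2*m+k) * (t/2)^(2*m+k)) *
                        (1 / (((1+k).factorial:ℝ) * m.factorial)) from by ring, key]
                  ring
        _ = ((4*(2*t)^k)/(((1+k).factorial:ℝ))) * E := tsum_mul_left
    rw [Real.norm_eq_abs, abs_mul,
      abs_of_pos (show (0:ℝ) < π * t^(1+k+1) / (2^(1+k) * ((1+k).factorial:ℝ)) by positivity)]
    calc π * t^(1+k+1) / (2^(1+k) * ((1+k).factorial:ℝ)) * |S2d (1+k) t|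
        ≤ π * t^(1+k+1) / (2^(1+k) * ((1+k).factorial:ℝ)) *
          (((4*(2*t)^k)/(((1+k).factorial:ℝ))) * E) := mul_le_mul_of_nonneg_left hJb (by positivity)
      _ = (2*π*E) * ((t^2)^(1+k) / (((1+k).factorial:ℝ) * ((1+k).factorial:ℝ))) := by
          field_simp
          ring
      _ ≤ (2*π*E) * ((t^2)^(1+k) / ((1+k).factorial:ℝ)) := by
          apply mul_le_mul_of_nonneg_left _ (by positivity)
          apply div_le_div_of_nonneg_left (by positivity) (factorial_cast_pos _)
          nlinarith [one_le_factorial_cast (1+k), factorial_cast_pos (1+k)]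
  · simpa using (FloorSemiring.tendsto_pow_div_factorial_atTop (t^2)).const_mul (2*π*E)

lemma AS1_term (n m : ℕ) {t : ℝ} (ht : 0 < t) :
    (π * t^(n+1) / (2^n * (n.factorial:ℝ))) *
      ((((n-m-1).factorial:ℝ)/(m.factorial:ℝ)) *
        ((((2*m:ℤ)-n : ℤ):ℝ) * (t/2)^((2*m:ℤ)-n-1) * (1/2)))
    = π * (((n-m-1).factorial:ℝ) * (((2*m:ℤ)-n : ℤ):ℝ) / ((n.factorial:ℝ)*(m.factorial:ℝ))) *
        (((t/2)^2)^m) := by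
  have hx : (t/2:ℝ) ≠ 0 := by positivity
  have h2' : (t/2:ℝ)^(n+1) * (t/2)^((2*m:ℤ)-n-1) = ((t/2)^2)^m := by
    rw [← zpow_natCast (t/2) (n+1), ← zpow_add₀ hx]
    rw [show ((n+1:ℕ):ℤ) + ((2*m:ℤ)-n-1) = ((2*m:ℕ):ℤ) by push_cast; ring]
    rw [zpow_natCast, pow_mul]
  have h3 : π * t^(n+1) / (2^n * (n.factorial:ℝ)) = π * 2 * (t/2)^(n+1) / (n.factorial:ℝ) := by
    rw [div_pow]
    field_simp
    ring
  rw [h3, ← h2']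
  ring

lemma tendsto_AS1d {t : ℝ} (ht : 0 < t) :
    Filter.Tendsto (fun n : ℕ =>
        -(1/π) * ((π * t^(n+1) / (2^n * (n.factorial:ℝ))) * S1d n t))
      Filter.atTop (nhds 1) := by
  have hx0 : (0:ℝ) < t/2 := by positivity
  set E := ∑' p:ℕ, ((t/2)^2)^p / (p.factorial:ℝ) with hE
  have hEsum : Summable fun p:ℕ => ((t/2)^2)^p/(p.factorial:ℝ) :=
    Real.summable_pow_div_factorial _
  have hE0 : 0 ≤ E := tsum_nonneg (fun p => by positivity)
  set v : ℕ → ℕ → ℝ := fun n m =>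
    -((((n-m-1).factorial:ℝ) * (((2*m:ℤ)-n : ℤ):ℝ) / ((n.factorial:ℝ)*(m.factorial:ℝ))) *
      (((t/2)^2)^m)) with hv
  have hW : ∀ n : ℕ, -(1/π) * ((π * t^(n+1) / (2^n * (n.factorial:ℝ))) * S1d n t)
      = ∑ m ∈ Finset.range n, v n m := by
    intro n
    rw [S1d, Finset.mul_sum, Finset.mul_sum]
    apply Finset.sum_congr rfl
    intro m _
    rw [AS1_term n m ht, hv]
    field_simp
  have hv0 : ∀ n : ℕ, 1 ≤ n → v n 0 = 1 := by
    intro n hn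
    rw [hv]
    simp only [Nat.sub_zero, Nat.factorial_zero, pow_zero, Nat.cast_one]
    have hnn : (n.factorial:ℝ) = n * ((n-1).factorial:ℝ) := by
      exact_mod_cast (Nat.mul_factorial_pred (by omega)).symm
    have hne : ((n-1).factorial:ℝ) ≠ 0 := (factorial_cast_pos _).ne'
    have hne2 : (n:ℝ) ≠ 0 := by positivity
    rw [hnn]
    push_cast
    field_simp
    ring
  have hvb : ∀ n m : ℕ, 2 ≤ n → 1 ≤ m → m < n →
      |v n m| ≤ (2/(n:ℝ)) * ((((t/2)^2)^m) / (m.factorial:ℝ)) := by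
    intro n m hn2 hm1 hmn
    set Na := ((2*m:ℤ)-n).natAbs with hNa
    have hKabs : |(((2*m:ℤ)-n : ℤ):ℝ)| = (Na:ℝ) := by
      rw [hNa, Nat.cast_natAbs, Int.cast_abs]
    have hNan : Na ≤ n := by rw [hNa]; omega
    have hnat : (n-1) * (Na * (n-m-1).factorial) ≤ n.factorial := by
      calc (n-1) * (Na * (n-m-1).factorial) ≤ (n-1) * (n * (n-2).factorial) := by
            apply Nat.mul_le_mul_left
            exact Nat.mul_le_mul hNan (Nat.factorial_le (by omega))
        _ = n * ((n-1) * ((n-1)-1).factorial) := by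
            rw [show (n-1)-1 = n-2 from by omega]; ring
        _ = n * (n-1).factorial := by rw [Nat.mul_factorial_pred (by omega)]
        _ = n.factorial := Nat.mul_factorial_pred (by omega)
    have hreal : ((n:ℝ)-1) * ((Na:ℝ) * ((n-m-1).factorial:ℝ)) ≤ (n.factorial:ℝ) := by
      have h' : (((n-1) * (Na * (n-m-1).factorial) : ℕ) : ℝ) ≤ ((n.factorial : ℕ) : ℝ) :=
        Nat.cast_le.mpr hnat
      push_cast [Nat.cast_sub (show 1 ≤ n by omega)] at h'
      exact h'
    have hX : (0:ℝ) ≤ ((t/2)^2)^m := by positivity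
    have hvabs : |v n m| = (((n-m-1).factorial:ℝ) * (Na:ℝ) / ((n.factorial:ℝ)*(m.factorial:ℝ))) *
        (((t/2)^2)^m) := by
      rw [hv, abs_neg, abs_mul, abs_div, abs_mul, hKabs,
        abs_of_nonneg hX, abs_of_nonneg (factorial_cast_pos (n-m-1)).le,
        abs_of_nonneg (by positivity : (0:ℝ) ≤ (n.factorial:ℝ)*(m.factorial:ℝ))]
    rw [hvabs, div_mul_eq_mul_div,
      show (2:ℝ)/(n:ℝ) * ((((t/2)^2)^m) / (m.factorial:ℝ))
        = (2 * ((t/2)^2)^m)/((n:ℝ)*(m.factorial:ℝ)) from by ring,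
      div_le_div_iff₀ (by positivity) (by positivity)]
    have hn2' : (2:ℝ) ≤ (n:ℝ) := by exact_mod_cast hn2
    have key : (n:ℝ) * ((Na:ℝ) * ((n-m-1).factorial:ℝ)) ≤ 2 * (n.factorial:ℝ) := by
      nlinarith [hreal, (Nat.cast_nonneg Na : (0:ℝ) ≤ (Na:ℝ)), factorial_cast_pos (n-m-1)]
    calc ((n-m-1).factorial:ℝ) * (Na:ℝ) * ((t/2)^2)^m * ((n:ℝ) * (m.factorial:ℝ))
        = ((n:ℝ) * ((Na:ℝ) * ((n-m-1).factorial:ℝ))) * (((t/2)^2)^m * (m.factorial:ℝ)) := by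
          ring
      _ ≤ (2 * (n.factorial:ℝ)) * (((t/2)^2)^m * (m.factorial:ℝ)) := by
          apply mul_le_mul_of_nonneg_right key (by positivity)
      _ = 2 * ((t/2)^2)^m * ((n.factorial:ℝ) * (m.factorial:ℝ)) := by ring
  have hsub : Filter.Tendsto (fun n : ℕ =>
      (∑ m ∈ Finset.range n, v n m) - 1) Filter.atTop (nhds 0) := by
    apply squeeze_zero_norm' (a := fun n : ℕ => (2*E)/(n:ℝ))
    · rw [Filter.eventually_atTop]
      refine ⟨2, fun n hn => ?_⟩
      have hsplit : ∑ m ∈ Finset.range n, v n m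
          = v n 0 + ∑ m ∈ Finset.Ico 1 n, v n m := by
        rw [Finset.range_eq_Ico, Finset.sum_eq_sum_Ico_succ_bot (by omega : 0 < n)]
      rw [hsplit, hv0 n (by omega)]
      rw [show (1:ℝ) + ∑ m ∈ Finset.Ico 1 n, v n m - 1 = ∑ m ∈ Finset.Ico 1 n, v n m by ring]
      rw [Real.norm_eq_abs]
      calc |∑ m ∈ Finset.Ico 1 n, v n m| ≤ ∑ m ∈ Finset.Ico 1 n, |v n m| :=
            Finset.abs_sum_le_sum_abs _ _
        _ ≤ ∑ m ∈ Finset.Ico 1 n, (2/(n:ℝ)) * ((((t/2)^2)^m) / (m.factorial:ℝ)) := by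
            apply Finset.sum_le_sum
            intro m hm
            rw [Finset.mem_Ico] at hm
            exact hvb n m (by omega) hm.1 hm.2
        _ = (2/(n:ℝ)) * ∑ m ∈ Finset.Ico 1 n, (((t/2)^2)^m) / (m.factorial:ℝ) := by
            rw [Finset.mul_sum]
        _ ≤ (2/(n:ℝ)) * E := by
            apply mul_le_mul_of_nonneg_left _ (by positivity)
            exact Summable.sum_le_tsum _ (fun m _ => by positivity) hEsum
        _ = (2*E)/(n:ℝ) := by ring
    · simpa using tendsto_const_div_atTop_nhds_zero_nat (2*E)
  have := hsub.add (tendsto_const_nhds (x := (1:ℝ)))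
  simp only [sub_add_cancel, zero_add] at this
  refine Filter.Tendsto.congr (fun n => (hW n).symm) this

/-- Asymptotic laws `Y_n′(t) ≈ 2^n n!/(π t^{n+1})` and `H_n′(t) ≈ i·2^n n!/(π t^{n+1})`
as `n → ∞` (over `n ≥ 1`), for every `t > 0`. -/
theorem besselY_besselH_deriv_asymptotic (t : ℝ) (ht : 0 < t) :
    Filter.Tendsto (fun n : ℕ =>
        (π * t ^ (n + 1) / (2 ^ n * (n.factorial : ℝ))) * deriv (besselY n) t)
      Filter.atTop (nhds 1) ∧
    Filter.Tendsto (fun n : ℕ =>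
        ((π * t ^ (n + 1) / (2 ^ n * (n.factorial : ℝ)) : ℝ) : ℂ) * deriv (besselH n) t)
      Filter.atTop (nhds Complex.I) := by
  have hπ : π ≠ 0 := Real.pi_ne_zero
  have h1 : Filter.Tendsto (fun n : ℕ => ((2/π) * ((t/2)⁻¹ * (1/2))) *
      ((π * t ^ (n + 1) / (2 ^ n * (n.factorial : ℝ))) * besselJ n t))
      Filter.atTop (nhds 0) := by
    simpa using (tendsto_AJ ht).const_mul ((2/π) * ((t/2)⁻¹ * (1/2)))
  have h2 : Filter.Tendsto (fun n : ℕ => ((2/π) * Real.log (t/2)) *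
      ((π * t ^ (n + 1) / (2 ^ n * (n.factorial : ℝ))) * Jd n t))
      Filter.atTop (nhds 0) := by
    simpa using (tendsto_AJd ht).const_mul ((2/π) * Real.log (t/2))
  have h4 : Filter.Tendsto (fun n : ℕ => (-(1/π)) *
      ((π * t ^ (n + 1) / (2 ^ n * (n.factorial : ℝ))) * S2d n t))
      Filter.atTop (nhds 0) := by
    simpa using (tendsto_AS2d ht).const_mul (-(1/π))
  have hc : Filter.Tendsto (fun n : ℕ =>
      ((2/π) * ((t/2)⁻¹ * (1/2))) *
        ((π * t ^ (n + 1) / (2 ^ n * (n.factorial : ℝ))) * besselJ n t)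
      + ((2/π) * Real.log (t/2)) *
        ((π * t ^ (n + 1) / (2 ^ n * (n.factorial : ℝ))) * Jd n t)
      + (-(1/π) * ((π * t ^ (n + 1) / (2 ^ n * (n.factorial : ℝ))) * S1d n t))
      + (-(1/π)) * ((π * t ^ (n + 1) / (2 ^ n * (n.factorial : ℝ))) * S2d n t))
      Filter.atTop (nhds 1) := by
    have := ((h1.add h2).add (tendsto_AS1d ht)).add h4
    simpa using this
  have hfun : ∀ n : ℕ,
      (π * t ^ (n + 1) / (2 ^ n * (n.factorial : ℝ))) * deriv (besselY n) t
      = ((2/π) * ((t/2)⁻¹ * (1/2))) *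
          ((π * t ^ (n + 1) / (2 ^ n * (n.factorial : ℝ))) * besselJ n t)
        + ((2/π) * Real.log (t/2)) *
          ((π * t ^ (n + 1) / (2 ^ n * (n.factorial : ℝ))) * Jd n t)
        + (-(1/π) * ((π * t ^ (n + 1) / (2 ^ n * (n.factorial : ℝ))) * S1d n t))
        + (-(1/π)) * ((π * t ^ (n + 1) / (2 ^ n * (n.factorial : ℝ))) * S2d n t) := by
    intro n
    rw [(besselY_hasDerivAt n ht).deriv]
    ring
  have part1 : Filter.Tendsto (fun n : ℕ =>
      (π * t ^ (n + 1) / (2 ^ n * (n.factorial : ℝ))) * deriv (besselY n) t)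
      Filter.atTop (nhds 1) := hc.congr (fun n => (hfun n).symm)
  refine ⟨part1, ?_⟩
  have hHd : ∀ n : ℕ, HasDerivAt (besselH n)
      ((Jd n t : ℂ) + Complex.I * ((deriv (besselY n) t : ℝ) : ℂ)) t := by
    intro n
    have hfc : besselH n = fun y : ℝ => ((besselJ n y : ℝ) : ℂ)
        + Complex.I * ((besselY n y : ℝ) : ℂ) := rfl
    rw [hfc]
    have hJc := (besselJ_hasDerivAt_s9 n ht).ofReal_comp
    have hYc := ((besselY_hasDerivAt n ht).deriv ▸ (besselY_hasDerivAt n ht)).ofReal_comp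
    exact hJc.add (hYc.const_mul Complex.I)
  have g1 : Filter.Tendsto (fun n : ℕ =>
      (((π * t ^ (n + 1) / (2 ^ n * (n.factorial : ℝ))) * Jd n t : ℝ) : ℂ))
      Filter.atTop (nhds 0) := by
    have := (Complex.continuous_ofReal.tendsto 0).comp (tendsto_AJd ht)
    simpa only [Function.comp_def, Complex.ofReal_zero] using this
  have g2 : Filter.Tendsto (fun n : ℕ =>
      (((π * t ^ (n + 1) / (2 ^ n * (n.factorial : ℝ))) * deriv (besselY n) t : ℝ) : ℂ))
      Filter.atTop (nhds 1) := by
    have := (Complex.continuous_ofReal.tendsto 1).comp part1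
    simpa only [Function.comp_def, Complex.ofReal_one] using this
  have hcomb := g1.add (g2.const_mul Complex.I)
  have hval : (0 : ℂ) + Complex.I * 1 = Complex.I := by ring
  rw [hval] at hcomb
  apply hcomb.congr
  intro n
  rw [(hHd n).deriv]
  push_cast
  ring
end

section
/- For every real number t > 0, the limit as n → ∞ (over n ≥ 1) of (4^n · n! · (n−1)! / (π · t^{2n})) · |J_n(t)| / |H_n(t)| equals 1. -/
open Real Filter

/- ### Auxiliary definitions -/

noncomputable def auxE (x : ℝ) : ℝ := ∑' p : ℕ, x ^ p / p.factorial

noncomputable def auxM (x : ℝ) : ℝ := ∑' m : ℕ, (m : ℝ) * x ^ m / m.factorial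

noncomputable def auxS (x : ℝ) (n : ℕ) : ℝ :=
  ∑' p : ℕ, ((-1 : ℝ) ^ p / ((p.factorial : ℝ) * ((n + p).factorial : ℝ))) * x ^ p

noncomputable def auxT (x : ℝ) (n : ℕ) : ℝ :=
  ∑' m : ℕ, ((-1 : ℝ) ^ m * (psiNat m + psiNat (m + n)) /
      ((m.factorial : ℝ) * ((m + n).factorial : ℝ))) * x ^ m

/- ### Auxiliary lemmas -/

lemma aux_abs_tsum_le {f h : ℕ → ℝ} (hfh : ∀ m, |f m| ≤ h m) (hh : Summable h) :
    |∑' m, f m| ≤ ∑' m, h m := by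
  have h1 : Summable fun m => ‖f m‖ :=
    hh.of_nonneg_of_le (fun _ => norm_nonneg _) (fun m => by simpa using hfh m)
  calc |∑' m, f m| = ‖∑' m, f m‖ := (Real.norm_eq_abs _).symm
    _ ≤ ∑' m, ‖f m‖ := norm_tsum_le_tsum_norm h1
    _ ≤ ∑' m, h m := Summable.tsum_le_tsum (fun m => by simpa using hfh m) h1 hh

lemma aux_psiNat_abs (m : ℕ) : |psiNat m| ≤ |Real.eulerMascheroniConstant| + m := by
  unfold psiNat
  have h1 : |∑ i ∈ Finset.range m, (1 : ℝ) / (i + 1)| ≤ m := by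
    rw [abs_of_nonneg (by positivity)]
    calc ∑ i ∈ Finset.range m, (1 : ℝ) / (i + 1)
        ≤ ∑ i ∈ Finset.range m, (1 : ℝ) := by
          refine Finset.sum_le_sum fun i _ => ?_
          rw [div_le_one (by positivity)]
          linarith [Nat.cast_nonneg (α := ℝ) i]
      _ = m := by simp
  calc |-Real.eulerMascheroniConstant + ∑ i ∈ Finset.range m, (1 : ℝ) / (i + 1)|
      ≤ |-Real.eulerMascheroniConstant| + |∑ i ∈ Finset.range m, (1 : ℝ) / (i + 1)| :=
        abs_add_le _ _
    _ ≤ |Real.eulerMascheroniConstant| + m := by rw [abs_neg]; linarith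

lemma aux_tendsto_pow_div_factorial (x : ℝ) :
    Tendsto (fun n : ℕ => x ^ n / n.factorial) atTop (nhds 0) :=
  (Real.summable_pow_div_factorial x).tendsto_atTop_zero

lemma aux_tendsto_const_div (c : ℝ) (d : ℝ) :
    Tendsto (fun n : ℕ => c / ((n : ℝ) + d)) atTop (nhds 0) :=
  Tendsto.div_atTop tendsto_const_nhds
    (tendsto_atTop_add_const_right _ d tendsto_natCast_atTop_atTop)

lemma aux_absH (J Y : ℝ) :
    ‖((J : ℂ) + Complex.I * (Y : ℂ))‖ = Real.sqrt (J ^ 2 + Y ^ 2) := by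
  rw [Complex.norm_def, Complex.normSq_apply]
  simp
  ring_nf

lemma auxE_summable (x : ℝ) : Summable (fun p : ℕ => x ^ p / p.factorial) :=
  Real.summable_pow_div_factorial x

lemma auxE_nonneg {x : ℝ} (hx : 0 ≤ x) : 0 ≤ auxE x :=
  tsum_nonneg fun p => by positivity

lemma auxM_summable {x : ℝ} (hx : 0 ≤ x) :
    Summable (fun m : ℕ => (m : ℝ) * x ^ m / m.factorial) := by
  refine (Real.summable_pow_div_factorial (2 * x)).of_nonneg_of_le
    (fun m => by positivity) (fun m => ?_)
  have hm : (m : ℝ) ≤ 2 ^ m := by exact_mod_cast (Nat.lt_two_pow_self (n := m)).le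
  rw [mul_pow]
  gcongr

lemma auxM_nonneg {x : ℝ} (hx : 0 ≤ x) : 0 ≤ auxM x :=
  tsum_nonneg fun m => by positivity

lemma auxS_term_abs {x : ℝ} (hx : 0 ≤ x) (n p : ℕ) :
    |((-1 : ℝ) ^ p / ((p.factorial : ℝ) * ((n + p).factorial : ℝ))) * x ^ p|
      = x ^ p / ((p.factorial : ℝ) * ((n + p).factorial : ℝ)) := by
  rw [abs_mul, abs_div, abs_pow, abs_neg, abs_one, one_pow,
    abs_of_nonneg (by positivity : (0:ℝ) ≤ (p.factorial : ℝ) * ((n + p).factorial : ℝ)),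
    abs_of_nonneg (by positivity : (0:ℝ) ≤ x ^ p)]
  ring

lemma auxS_summable {x : ℝ} (hx : 0 ≤ x) (n : ℕ) :
    Summable (fun p : ℕ =>
      ((-1 : ℝ) ^ p / ((p.factorial : ℝ) * ((n + p).factorial : ℝ))) * x ^ p) := by
  rw [← summable_abs_iff]
  refine (auxE_summable x).of_nonneg_of_le (fun p => abs_nonneg _) (fun p => ?_)
  rw [auxS_term_abs hx n p]
  have h1 : (1:ℝ) ≤ ((n + p).factorial : ℝ) := by exact_mod_cast (n + p).factorial_pos
  gcongr
  exact le_mul_of_one_le_right (by positivity) h1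
lemma auxS_est {x : ℝ} (hx : 0 < x) (n : ℕ) :
    |(n.factorial : ℝ) * auxS x n - 1| ≤ x * auxE x / (n + 1) := by
  have hfn : ((n.factorial : ℝ)) ≠ 0 := by positivity
  have key : (n.factorial : ℝ) * auxS x n - 1 = (n.factorial : ℝ) * ∑' p : ℕ,
      ((-1 : ℝ) ^ (p+1) / (((p+1).factorial : ℝ) * ((n + (p+1)).factorial : ℝ))) * x ^ (p+1) := by
    unfold auxS
    rw [Summable.tsum_eq_zero_add (auxS_summable hx.le n)]
    simp only [pow_zero, Nat.factorial_zero, Nat.add_zero, Nat.cast_one, one_mul, mul_one]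
    field_simp
    ring
  have htail : |∑' p : ℕ,
      ((-1 : ℝ) ^ (p+1) / (((p+1).factorial : ℝ) * ((n + (p+1)).factorial : ℝ))) * x ^ (p+1)|
        ≤ x / (((n+1).factorial : ℝ)) * auxE x := by
    have hh : Summable (fun p : ℕ => x / (((n+1).factorial : ℝ)) * (x ^ p / p.factorial)) :=
      (auxE_summable x).mul_left _
    have hle : ∀ p : ℕ,
        |((-1 : ℝ) ^ (p+1) / (((p+1).factorial : ℝ) * ((n + (p+1)).factorial : ℝ))) * x ^ (p+1)|
          ≤ x / (((n+1).factorial : ℝ)) * (x ^ p / p.factorial) := by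
      intro p
      rw [auxS_term_abs hx.le n (p+1)]
      have hd : ((n+1).factorial : ℝ) * (p.factorial : ℝ)
          ≤ ((p+1).factorial : ℝ) * ((n + (p+1)).factorial : ℝ) := by
        have h := Nat.mul_le_mul (Nat.factorial_le (show p ≤ p + 1 by omega))
          (Nat.factorial_le (show n + 1 ≤ n + (p + 1) by omega))
        calc ((n+1).factorial : ℝ) * (p.factorial : ℝ)
            = (p.factorial : ℝ) * ((n+1).factorial : ℝ) := by ring
          _ ≤ ((p+1).factorial : ℝ) * ((n + (p+1)).factorial : ℝ) := by exact_mod_cast h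
      calc x ^ (p+1) / (((p+1).factorial : ℝ) * ((n + (p+1)).factorial : ℝ))
          ≤ x ^ (p+1) / (((n+1).factorial : ℝ) * (p.factorial : ℝ)) := by
            gcongr
        _ = x / (((n+1).factorial : ℝ)) * (x ^ p / p.factorial) := by
            rw [pow_succ]
            ring
    calc |∑' p : ℕ,
        ((-1 : ℝ) ^ (p+1) / (((p+1).factorial : ℝ) * ((n + (p+1)).factorial : ℝ))) * x ^ (p+1)|
        ≤ ∑' p : ℕ, x / (((n+1).factorial : ℝ)) * (x ^ p / p.factorial) :=
          aux_abs_tsum_le hle hh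
      _ = x / (((n+1).factorial : ℝ)) * auxE x := by rw [tsum_mul_left]; rfl
  have hfact : ((n+1).factorial : ℝ) = ((n:ℝ) + 1) * (n.factorial : ℝ) := by
    rw [Nat.factorial_succ]; push_cast; ring
  calc |(n.factorial : ℝ) * auxS x n - 1|
      = (n.factorial : ℝ) * |∑' p : ℕ,
        ((-1 : ℝ) ^ (p+1) / (((p+1).factorial : ℝ) * ((n + (p+1)).factorial : ℝ))) * x ^ (p+1)| := by
        rw [key, abs_mul, abs_of_nonneg (by positivity : (0:ℝ) ≤ (n.factorial : ℝ))]
    _ ≤ (n.factorial : ℝ) * (x / (((n+1).factorial : ℝ)) * auxE x) := by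
        gcongr
    _ = x * auxE x / ((n:ℝ) + 1) := by
        rw [hfact]
        field_simp

lemma auxT_est {x : ℝ} (hx : 0 < x) (n : ℕ) :
    |auxT x n| ≤ ((2 * |Real.eulerMascheroniConstant| + n) * auxE x + 2 * auxM x)
      / (n.factorial : ℝ) := by
  set g := |Real.eulerMascheroniConstant| with hg_def
  have hg : 0 ≤ g := abs_nonneg _
  have hh : Summable (fun m : ℕ =>
      ((2*g + n) * (x ^ m / m.factorial) + 2 * ((m:ℝ) * x ^ m / m.factorial))
        / (n.factorial : ℝ)) := by
    exact (((auxE_summable x).mul_left _).add ((auxM_summable hx.le).mul_left 2)).div_const _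
  have hle : ∀ m : ℕ,
      |((-1 : ℝ) ^ m * (psiNat m + psiNat (m + n)) /
        ((m.factorial : ℝ) * ((m + n).factorial : ℝ))) * x ^ m|
      ≤ ((2*g + n) * (x ^ m / m.factorial) + 2 * ((m:ℝ) * x ^ m / m.factorial))
        / (n.factorial : ℝ) := by
    intro m
    have hd : (0:ℝ) < (m.factorial : ℝ) * ((m + n).factorial : ℝ) := by positivity
    have habs : |((-1 : ℝ) ^ m * (psiNat m + psiNat (m + n)) /
        ((m.factorial : ℝ) * ((m + n).factorial : ℝ))) * x ^ m|
        = |psiNat m + psiNat (m + n)| * x ^ m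
            / ((m.factorial : ℝ) * ((m + n).factorial : ℝ)) := by
      rw [abs_mul, abs_div, abs_mul, abs_pow, abs_neg, abs_one, one_pow, one_mul,
        abs_of_nonneg hd.le, abs_of_nonneg (by positivity : (0:ℝ) ≤ x ^ m)]
      ring
    have hpsi : |psiNat m + psiNat (m + n)| ≤ 2*g + 2*m + n := by
      calc |psiNat m + psiNat (m + n)| ≤ |psiNat m| + |psiNat (m + n)| := abs_add_le _ _
        _ ≤ (g + m) + (g + (m + n)) := by
            have h1 := aux_psiNat_abs m
            have h2 := aux_psiNat_abs (m + n)
            rw [← hg_def] at h1 h2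
            push_cast at h2 ⊢
            linarith
        _ = 2*g + 2*m + n := by push_cast; ring
    have hfac : (m.factorial : ℝ) * (n.factorial : ℝ)
        ≤ (m.factorial : ℝ) * ((m + n).factorial : ℝ) := by
      have h3 : (n.factorial : ℝ) ≤ ((m + n).factorial : ℝ) := by
        exact_mod_cast Nat.factorial_le (show n ≤ m + n by omega)
      gcongr
    rw [habs]
    calc |psiNat m + psiNat (m + n)| * x ^ m / ((m.factorial : ℝ) * ((m + n).factorial : ℝ))
        ≤ (2*g + 2*m + n) * x ^ m / ((m.factorial : ℝ) * (n.factorial : ℝ)) := by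
          gcongr
      _ = ((2*g + n) * (x ^ m / m.factorial) + 2 * ((m:ℝ) * x ^ m / m.factorial))
            / (n.factorial : ℝ) := by
          have h1 : (m.factorial : ℝ) ≠ 0 := by positivity
          have h2 : (n.factorial : ℝ) ≠ 0 := by positivity
          field_simp
          ring
  calc |auxT x n| ≤ ∑' m : ℕ,
        ((2*g + n) * (x ^ m / m.factorial) + 2 * ((m:ℝ) * x ^ m / m.factorial))
          / (n.factorial : ℝ) := aux_abs_tsum_le hle hh
    _ = ((2 * g + n) * auxE x + 2 * auxM x) / (n.factorial : ℝ) := by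
        rw [tsum_div_const, Summable.tsum_add (((auxE_summable x)).mul_left _)
          (((auxM_summable hx.le)).mul_left 2), tsum_mul_left, tsum_mul_left]
        rfl
set_option maxHeartbeats 1000000 in
/-- Asymptotic law for the moduli of the eigenvalues of the far-field operator of a
sound-soft disk: `(4^n n! (n−1)! / (π t^{2n})) · |J_n(t)| / |H_n(t)| → 1` as `n → ∞`
(over `n ≥ 1`), for every `t > 0`. -/
theorem besselJ_div_besselH_asymptotic (t : ℝ) (ht : 0 < t) :
    Filter.Tendsto (fun n : ℕ =>
        (4 ^ n * (n.factorial : ℝ) * ((n - 1).factorial : ℝ) / (π * t ^ (2 * n)))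
          * |besselJ n t| / ‖besselH n t‖)
      Filter.atTop (nhds 1) := by
  have hu : (0:ℝ) < t / 2 := by linarith
  set u : ℝ := t / 2 with hu_def
  set x : ℝ := u ^ 2 with hx_def
  have hx : 0 < x := by positivity
  have hxu : ∀ n : ℕ, x ^ n = u ^ n * u ^ n := by
    intro n
    rw [hx_def, ← pow_add, ← pow_mul, two_mul]
  set g : ℝ := |Real.eulerMascheroniConstant| with hg_def
  have hg : 0 ≤ g := abs_nonneg _
  have hEx0 : 0 ≤ auxE x := auxE_nonneg hx.le
  have hMx0 : 0 ≤ auxM x := auxM_nonneg hx.le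
  -- J in terms of auxS
  have hJ : ∀ n : ℕ, besselJ n t = u ^ n * auxS x n := by
    intro n
    unfold besselJ auxS
    rw [← tsum_mul_left]
    congr 1
    ext p
    rw [← hu_def, hx_def, pow_add, pow_mul]
    ring
  -- the tsum part of Y in terms of auxT
  have hG : ∀ n : ℕ, (∑' m : ℕ, ((-1 : ℝ) ^ m * (psiNat m + psiNat (m + n)) /
      ((m.factorial : ℝ) * ((m + n).factorial : ℝ))) * u ^ (2 * m + n))
        = u ^ n * auxT x n := by
    intro n
    unfold auxT
    rw [← tsum_mul_left]
    congr 1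
    ext m
    rw [hx_def, pow_add, pow_mul]
    ring
  -- the finite sum part of Y
  have hF : ∀ n : ℕ, u ^ n * (∑ m ∈ Finset.range n,
      (((n - m - 1).factorial : ℝ) / (m.factorial : ℝ)) * u ^ ((2 * m : ℤ) - n))
        = ∑ m ∈ Finset.range n, (((n - m - 1).factorial : ℝ) / (m.factorial : ℝ)) * x ^ m := by
    intro n
    rw [Finset.mul_sum]
    refine Finset.sum_congr rfl fun m _ => ?_
    have hz : u ^ (n : ℕ) * u ^ ((2 * (m:ℤ)) - n) = x ^ m := by
      rw [← zpow_natCast u n, ← zpow_add₀ (ne_of_gt hu),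
        show (n:ℤ) + (2 * (m:ℤ) - n) = ((2 * m : ℕ) : ℤ) by push_cast; ring,
        zpow_natCast, pow_mul, ← hx_def]
    calc u ^ n * ((((n - m - 1).factorial : ℝ) / (m.factorial : ℝ)) * u ^ ((2 * (m:ℤ)) - n))
        = (((n - m - 1).factorial : ℝ) / (m.factorial : ℝ)) * (u ^ n * u ^ ((2 * (m:ℤ)) - n)) := by
          ring
      _ = (((n - m - 1).factorial : ℝ) / (m.factorial : ℝ)) * x ^ m := by rw [hz]
  -- A n := n! * auxS x n → 1
  have hA : Tendsto (fun n : ℕ => (n.factorial : ℝ) * auxS x n) atTop (nhds 1) := by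
    rw [← tendsto_sub_nhds_zero_iff]
    refine squeeze_zero_norm (fun n => ?_) (aux_tendsto_const_div (x * auxE x) 1)
    simpa [Real.norm_eq_abs] using auxS_est hx n
  -- decomposition of π u^n/(n-1)! * Y
  have hBeq : ∀ n : ℕ, π * u ^ n / ((n - 1).factorial : ℝ) * besselY n t
      = 2 * Real.log u * (x ^ n / ((n.factorial : ℝ) * ((n - 1).factorial : ℝ)))
          * ((n.factorial : ℝ) * auxS x n)
        - (∑ m ∈ Finset.range n, (((n - m - 1).factorial : ℝ) / (m.factorial : ℝ)) * x ^ m)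
            / ((n - 1).factorial : ℝ)
        - x ^ n / ((n - 1).factorial : ℝ) * auxT x n := by
    intro n
    unfold besselY
    rw [← hu_def, hJ n, hG n, ← hF n]
    have hπ : π ≠ 0 := Real.pi_ne_zero
    have hf1 : ((n - 1).factorial : ℝ) ≠ 0 := by positivity
    have hf2 : ((n).factorial : ℝ) ≠ 0 := by positivity
    rw [hxu n]
    field_simp
  -- P → 0
  have hP : Tendsto (fun n : ℕ => 2 * Real.log u * (x ^ n / ((n.factorial : ℝ)
      * ((n - 1).factorial : ℝ))) * ((n.factorial : ℝ) * auxS x n)) atTop (nhds 0) := by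
    have h1 : Tendsto (fun n : ℕ => 2 * Real.log u * (x ^ n / ((n.factorial : ℝ)
        * ((n - 1).factorial : ℝ)))) atTop (nhds 0) := by
      have hb : Tendsto (fun n : ℕ => |2 * Real.log u| * (x ^ n / (n.factorial : ℝ)))
          atTop (nhds 0) := by
        simpa using (aux_tendsto_pow_div_factorial x).const_mul (|2 * Real.log u|)
      refine squeeze_zero_norm (fun n => ?_) hb
      rw [Real.norm_eq_abs, abs_mul]
      gcongr
      rw [abs_of_nonneg (by positivity : (0:ℝ) ≤ x ^ n / ((n.factorial : ℝ) * ((n - 1).factorial : ℝ)))]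
      gcongr
      exact le_mul_of_one_le_right (by positivity) (Nat.one_le_cast.mpr (n-1).factorial_pos)
    have := h1.mul hA
    simpa using this
  -- Q → 1
  have hQ : Tendsto (fun n : ℕ => (∑ m ∈ Finset.range n,
      (((n - m - 1).factorial : ℝ) / (m.factorial : ℝ)) * x ^ m)
        / ((n - 1).factorial : ℝ)) atTop (nhds 1) := by
    rw [← tendsto_sub_nhds_zero_iff]
    refine squeeze_zero_norm' ?_ (aux_tendsto_const_div (auxE x) (-1))
    rw [eventually_atTop]
    refine ⟨2, fun n hn => ?_⟩
    obtain ⟨k, rfl⟩ : ∃ k, n = k + 2 := ⟨n - 2, by omega⟩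
    rw [Finset.sum_range_succ' _ (k+1)]
    have hf0 : (((k + 2 - 0 - 1).factorial : ℝ) / ((0:ℕ).factorial : ℝ)) * x ^ 0
        = ((k + 2 - 1).factorial : ℝ) := by norm_num
    have hfk : ((k + 2 - 1).factorial : ℝ) = ((k:ℝ) + 1) * ((k).factorial : ℝ) := by
      rw [show k + 2 - 1 = k + 1 by omega, Nat.factorial_succ]
      push_cast
      ring
    have hs1nn : (0:ℝ) ≤ ∑ i ∈ Finset.range (k+1),
        (((k + 2 - (i+1) - 1).factorial : ℝ) / (((i+1)).factorial : ℝ)) * x ^ (i+1) := by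
      refine Finset.sum_nonneg fun i _ => by positivity
    have key : (∑ i ∈ Finset.range (k+1),
          (((k + 2 - (i+1) - 1).factorial : ℝ) / (((i+1)).factorial : ℝ)) * x ^ (i+1)
          + (((k + 2 - 0 - 1).factorial : ℝ) / ((0:ℕ).factorial : ℝ)) * x ^ 0)
          / ((k + 2 - 1).factorial : ℝ) - 1
        = (∑ i ∈ Finset.range (k+1),
            (((k + 2 - (i+1) - 1).factorial : ℝ) / (((i+1)).factorial : ℝ)) * x ^ (i+1))
          / ((k + 2 - 1).factorial : ℝ) := by
      rw [hf0]
      have : ((k + 2 - 1).factorial : ℝ) ≠ 0 := by positivity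
      field_simp
      ring
    rw [key, Real.norm_eq_abs, abs_of_nonneg (by positivity)]
    have hterm : ∀ i ∈ Finset.range (k+1),
        (((k + 2 - (i+1) - 1).factorial : ℝ) / (((i+1)).factorial : ℝ)) * x ^ (i+1)
          ≤ ((k).factorial : ℝ) * (x ^ (i+1) / (((i+1)).factorial : ℝ)) := by
      intro i hi
      have h1 : ((k + 2 - (i+1) - 1).factorial : ℝ) ≤ ((k).factorial : ℝ) := by
        exact_mod_cast Nat.factorial_le (show k + 2 - (i+1) - 1 ≤ k by omega)
      calc (((k + 2 - (i+1) - 1).factorial : ℝ) / (((i+1)).factorial : ℝ)) * x ^ (i+1)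
          ≤ (((k).factorial : ℝ) / (((i+1)).factorial : ℝ)) * x ^ (i+1) := by
            gcongr
        _ = ((k).factorial : ℝ) * (x ^ (i+1) / (((i+1)).factorial : ℝ)) := by ring
    have hsum2 : ∑ i ∈ Finset.range (k+1), x ^ (i+1) / (((i+1)).factorial : ℝ) ≤ auxE x := by
      have h0 : (0:ℝ) ≤ x ^ 0 / ((0:ℕ).factorial : ℝ) := by positivity
      calc ∑ i ∈ Finset.range (k+1), x ^ (i+1) / (((i+1)).factorial : ℝ)
          ≤ ∑ i ∈ Finset.range (k+1), x ^ (i+1) / (((i+1)).factorial : ℝ)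
            + x ^ 0 / ((0:ℕ).factorial : ℝ) := by linarith
        _ = ∑ j ∈ Finset.range (k+2), x ^ j / ((j).factorial : ℝ) := by
            rw [Finset.sum_range_succ' (fun j => x ^ j / ((j).factorial : ℝ)) (k+1)]
        _ ≤ auxE x := Summable.sum_le_tsum _ (fun j _ => by positivity) (auxE_summable x)
    calc (∑ i ∈ Finset.range (k+1),
          (((k + 2 - (i+1) - 1).factorial : ℝ) / (((i+1)).factorial : ℝ)) * x ^ (i+1))
          / ((k + 2 - 1).factorial : ℝ)
        ≤ (∑ i ∈ Finset.range (k+1), ((k).factorial : ℝ) * (x ^ (i+1) / (((i+1)).factorial : ℝ)))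
          / ((k + 2 - 1).factorial : ℝ) := by
          have hd : (0:ℝ) < ((k + 2 - 1).factorial : ℝ) := by positivity
          exact (div_le_div_iff_of_pos_right hd).mpr (Finset.sum_le_sum hterm)
      _ = (∑ i ∈ Finset.range (k+1), x ^ (i+1) / (((i+1)).factorial : ℝ)) / ((k:ℝ) + 1) := by
          rw [← Finset.mul_sum, hfk]
          have h1 : ((k).factorial : ℝ) ≠ 0 := by positivity
          have h2 : ((k:ℝ) + 1) ≠ 0 := by positivity
          field_simp
      _ ≤ auxE x / ((k:ℝ) + 1) := by gcongr
      _ = auxE x / ((↑(k + 2):ℝ) + (-1)) := by push_cast; ring_nf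
  -- W → 0
  have hW : Tendsto (fun n : ℕ => x ^ n / ((n - 1).factorial : ℝ) * auxT x n)
      atTop (nhds 0) := by
    refine squeeze_zero_norm (fun n => ?_) (f := fun n : ℕ => x ^ n / ((n - 1).factorial : ℝ) * auxT x n)
      (a := fun n : ℕ => (2 * g * auxE x + 2 * auxM x) * (x ^ n / (n.factorial : ℝ))
        + auxE x * ((2 * x) ^ n / (n.factorial : ℝ))) ?_
    · show ‖x ^ n / ((n - 1).factorial : ℝ) * auxT x n‖
          ≤ (2 * g * auxE x + 2 * auxM x) * (x ^ n / (n.factorial : ℝ))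
            + auxE x * ((2 * x) ^ n / (n.factorial : ℝ))
      have hT := auxT_est hx n
      rw [← hg_def] at hT
      have h2 : ((n:ℝ)) * x ^ n ≤ (2 * x) ^ n := by
        rw [mul_pow]
        have hm : (n : ℝ) ≤ 2 ^ n := by exact_mod_cast (Nat.lt_two_pow_self (n := n)).le
        exact mul_le_mul hm le_rfl (by positivity) (by positivity)
      calc ‖x ^ n / ((n - 1).factorial : ℝ) * auxT x n‖
          = x ^ n / ((n - 1).factorial : ℝ) * |auxT x n| := by
            rw [Real.norm_eq_abs, abs_mul, abs_of_nonneg (by positivity : (0:ℝ) ≤ x ^ n / ((n - 1).factorial : ℝ))]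
        _ ≤ x ^ n / ((n - 1).factorial : ℝ)
              * (((2 * g + n) * auxE x + 2 * auxM x) / (n.factorial : ℝ)) := by
            gcongr
        _ ≤ x ^ n * (((2 * g + n) * auxE x + 2 * auxM x) / (n.factorial : ℝ)) := by
            refine mul_le_mul_of_nonneg_right ?_ (by positivity)
            exact div_le_self (by positivity) (by exact_mod_cast (n-1).factorial_pos)
        _ = (2 * g * auxE x + 2 * auxM x) * (x ^ n / (n.factorial : ℝ))
              + auxE x * ((n:ℝ) * x ^ n / (n.factorial : ℝ)) := by
            ring
        _ ≤ (2 * g * auxE x + 2 * auxM x) * (x ^ n / (n.factorial : ℝ))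
              + auxE x * ((2 * x) ^ n / (n.factorial : ℝ)) := by
            gcongr
    · have h1 := (aux_tendsto_pow_div_factorial x).const_mul (2 * g * auxE x + 2 * auxM x)
      have h2 := (aux_tendsto_pow_div_factorial (2 * x)).const_mul (auxE x)
      simpa using h1.add h2
  -- B → -1
  have hB : Tendsto (fun n : ℕ => π * u ^ n / ((n - 1).factorial : ℝ) * besselY n t)
      atTop (nhds (-1)) := by
    have h := (hP.sub hQ).sub hW
    norm_num at h
    exact Tendsto.congr (fun n => (hBeq n).symm) h
  -- C → 0
  have hC : Tendsto (fun n : ℕ => π * u ^ n / ((n - 1).factorial : ℝ) * besselJ n t)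
      atTop (nhds 0) := by
    have hCeq : ∀ n : ℕ, π * u ^ n / ((n - 1).factorial : ℝ) * besselJ n t
        = (π * (x ^ n / ((n.factorial : ℝ) * ((n - 1).factorial : ℝ))))
            * ((n.factorial : ℝ) * auxS x n) := by
      intro n
      rw [hJ n, hxu n]
      have hf1 : ((n - 1).factorial : ℝ) ≠ 0 := by positivity
      have hf2 : ((n).factorial : ℝ) ≠ 0 := by positivity
      field_simp
    have h1 : Tendsto (fun n : ℕ => π * (x ^ n / ((n.factorial : ℝ)
        * ((n - 1).factorial : ℝ)))) atTop (nhds 0) := by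
      have hb : Tendsto (fun n : ℕ => π * (x ^ n / (n.factorial : ℝ))) atTop (nhds 0) := by
        simpa using (aux_tendsto_pow_div_factorial x).const_mul π
      refine squeeze_zero_norm (fun n => ?_) hb
      rw [Real.norm_eq_abs, abs_of_nonneg (by positivity)]
      gcongr
      exact le_mul_of_one_le_right (by positivity) (Nat.one_le_cast.mpr (n-1).factorial_pos)
    have := h1.mul hA
    rw [zero_mul] at this
    exact Tendsto.congr (fun n => (hCeq n).symm) this
  -- the square root of C² + B² → 1
  have hsq : Tendsto (fun n : ℕ => Real.sqrt
      ((π * u ^ n / ((n - 1).factorial : ℝ) * besselJ n t) ^ 2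
        + (π * u ^ n / ((n - 1).factorial : ℝ) * besselY n t) ^ 2)) atTop (nhds 1) := by
    have h1 : Tendsto (fun n : ℕ =>
        (π * u ^ n / ((n - 1).factorial : ℝ) * besselJ n t) ^ 2
          + (π * u ^ n / ((n - 1).factorial : ℝ) * besselY n t) ^ 2) atTop (nhds 1) := by
      have := (hC.mul hC).add (hB.mul hB)
      norm_num at this
      simpa [sq] using this
    have h2 := (Real.continuous_sqrt.tendsto 1).comp h1
    rwa [Real.sqrt_one] at h2
  -- main limit
  have hmain : Tendsto (fun n : ℕ => |(n.factorial : ℝ) * auxS x n| / Real.sqrt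
      ((π * u ^ n / ((n - 1).factorial : ℝ) * besselJ n t) ^ 2
        + (π * u ^ n / ((n - 1).factorial : ℝ) * besselY n t) ^ 2)) atTop (nhds 1) := by
    have := (hA.abs).div hsq one_ne_zero
    rw [div_one, abs_one] at this
    exact this
  -- eventual equality
  have heq : (fun n : ℕ => |(n.factorial : ℝ) * auxS x n| / Real.sqrt
      ((π * u ^ n / ((n - 1).factorial : ℝ) * besselJ n t) ^ 2
        + (π * u ^ n / ((n - 1).factorial : ℝ) * besselY n t) ^ 2))
      =ᶠ[atTop] (fun n : ℕ =>
        (4 ^ n * (n.factorial : ℝ) * ((n - 1).factorial : ℝ) / (π * t ^ (2 * n)))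
          * |besselJ n t| / ‖besselH n t‖) := by
    have hBlt : ∀ᶠ n in atTop, π * u ^ n / ((n - 1).factorial : ℝ) * besselY n t < -1/2 :=
      hB.eventually_lt_const (by norm_num)
    filter_upwards [hBlt] with n hBn
    have hπ : π ≠ 0 := Real.pi_ne_zero
    have hπ0 : 0 < π := Real.pi_pos
    have hun : (0:ℝ) < u ^ n := pow_pos hu n
    have hf1 : (0:ℝ) < ((n - 1).factorial : ℝ) := by exact_mod_cast (n-1).factorial_pos
    have hf2 : (0:ℝ) < ((n).factorial : ℝ) := by exact_mod_cast (n).factorial_pos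
    set C0 : ℝ := π * u ^ n / ((n - 1).factorial : ℝ) * besselJ n t with hC0_def
    set B0 : ℝ := π * u ^ n / ((n - 1).factorial : ℝ) * besselY n t with hB0_def
    have hs0 : 0 < Real.sqrt (C0 ^ 2 + B0 ^ 2) :=
      Real.sqrt_pos.mpr (by nlinarith [sq_nonneg C0])
    have hk : (0:ℝ) < ((n - 1).factorial : ℝ) / (π * u ^ n) := by positivity
    have hJC : besselJ n t = ((n - 1).factorial : ℝ) / (π * u ^ n) * C0 := by
      rw [hC0_def]
      field_simp
    have hYB : besselY n t = ((n - 1).factorial : ℝ) / (π * u ^ n) * B0 := by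
      rw [hB0_def]
      field_simp
    have hH : ‖besselH n t‖
        = ((n - 1).factorial : ℝ) / (π * u ^ n) * Real.sqrt (C0 ^ 2 + B0 ^ 2) := by
      unfold besselH
      rw [aux_absH, hJC, hYB, show (((n - 1).factorial : ℝ) / (π * u ^ n) * C0) ^ 2
          + (((n - 1).factorial : ℝ) / (π * u ^ n) * B0) ^ 2
          = (((n - 1).factorial : ℝ) / (π * u ^ n)) ^ 2 * (C0 ^ 2 + B0 ^ 2) by ring,
        Real.sqrt_mul (sq_nonneg _), Real.sqrt_sq hk.le]
    have hJabs : |besselJ n t| = u ^ n / ((n).factorial : ℝ) * |((n).factorial : ℝ) * auxS x n| := by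
      rw [hJ n, abs_mul, abs_mul, abs_of_nonneg hun.le, abs_of_nonneg hf2.le]
      field_simp
    have ht2 : t ^ (2 * n) = 4 ^ n * x ^ n := by
      rw [show t = 2 * u by rw [hu_def]; ring, mul_pow, hx_def, pow_mul, pow_mul]
      norm_num
    rw [hH, hJabs, ht2, hxu n]
    field_simp
  exact Tendsto.congr' heq hmain
end
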